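/- arXiv:2204.08819 — 11 statements merged into one kernel-verified Lean document; each statement's English description precedes it below -/
import Mathlib

section
/- Let n ≥ 1, let a, b be real numbers and let C ∈ M_n(ℂ). The 2n×2n block matrix M = [[a·I_n, C],[Cᴴ, b·I_n]] is positive semidefinite if and only if a ≥ 0, b ≥ 0, and ‖C‖² ≤ a·b, where ‖C‖ is the ℓ²→ℓ² operator norm of C. -/
open Matrix
open scoped ComplexOrder
open scoped Matrix.Norms.L2Operator

/-!
For `a > 0` the Schur complement of the block `a • 1` is `b • 1 - a⁻¹ • Cᴴ * C`, which is positive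
semidefinite iff `Cᴴ * C ≤ a * b` in the Loewner order; by the C*-identity `‖Cᴴ * C‖ = ‖C‖ ^ 2`
this says `‖C‖ ^ 2 ≤ a * b`. The degenerate cases `a = 0` or `b = 0` follow by adding `ε • 1`
to the block matrix and letting `ε → 0⁺`, since the positive semidefinite cone is closed.
-/

open scoped MatrixOrder Topology
open Filter

namespace Matrix

variable {ι : Type*}

theorem posSemidef_ofReal_smul_iff {A : Matrix ι ι ℂ} {a : ℝ} (ha : 0 < a) :
    ((a : ℂ) • A).PosSemidef ↔ A.PosSemidef := by
  refine ⟨fun h => ?_, fun h => h.smul (by exact_mod_cast ha.le)⟩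
  have h' := h.smul (a := ((a⁻¹ : ℝ) : ℂ)) (by exact_mod_cast (inv_pos.2 ha).le)
  rwa [smul_smul, ← Complex.ofReal_mul, inv_mul_cancel₀ ha.ne', Complex.ofReal_one,
    one_smul] at h'

variable [DecidableEq ι]

theorem fromBlocks_smul_one_add_smul_one (a b ε : ℝ) (C : Matrix ι ι ℂ) :
    fromBlocks ((a : ℂ) • 1) C Cᴴ ((b : ℂ) • 1) + (ε : ℂ) • 1 =
      fromBlocks (((a + ε : ℝ) : ℂ) • 1) C Cᴴ (((b + ε : ℝ) : ℂ) • 1) := by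
  rw [← fromBlocks_one, fromBlocks_smul, fromBlocks_add]
  simp [add_smul]

theorem PosSemidef.nonneg_of_fromBlocks_smul_one [Nonempty ι] {a b : ℝ} {C : Matrix ι ι ℂ}
    (h : (fromBlocks ((a : ℂ) • 1) C Cᴴ ((b : ℂ) • 1)).PosSemidef) : 0 ≤ a ∧ 0 ≤ b := by
  obtain ⟨i⟩ := ‹Nonempty ι›
  have ha := h.diag_nonneg (i := Sum.inl i)
  have hb := h.diag_nonneg (i := Sum.inr i)
  simp only [fromBlocks_apply₁₁, fromBlocks_apply₂₂, smul_apply, one_apply_eq, smul_eq_mul,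
    mul_one, Complex.zero_le_real] at ha hb
  exact ⟨ha, hb⟩

variable [Fintype ι]

theorem norm_sq_le_iff_posSemidef_smul_one_sub (C : Matrix ι ι ℂ) {r : ℝ} (hr : 0 ≤ r) :
    ‖C‖ ^ 2 ≤ r ↔ ((r : ℂ) • 1 - Cᴴ * C).PosSemidef := by
  rw [sq, ← CStarRing.norm_star_mul_self, CStarAlgebra.norm_le_iff_le_algebraMap _ hr,
    le_iff, Algebra.algebraMap_eq_smul_one, Complex.coe_smul]
  rfl

theorem posSemidef_fromBlocks_smul_one_iff {a b : ℝ} (ha : 0 < a) (hb : 0 ≤ b)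
    (C : Matrix ι ι ℂ) :
    (fromBlocks ((a : ℂ) • 1) C Cᴴ ((b : ℂ) • 1)).PosSemidef ↔ ‖C‖ ^ 2 ≤ a * b := by
  have hA : ((a : ℂ) • (1 : Matrix ι ι ℂ)).PosDef := PosDef.one.smul (by exact_mod_cast ha)
  have := hA.isUnit.invertible
  have ha' : (a : ℂ) ≠ 0 := by exact_mod_cast ha.ne'
  have := invertibleOfNonzero ha'
  rw [PosDef.fromBlocks₁₁ C _ hA, inv_smul _ _ (by simp), inv_one, invOf_eq_inv,
    norm_sq_le_iff_posSemidef_smul_one_sub C (mul_nonneg ha.le hb),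
    ← posSemidef_ofReal_smul_iff ha]
  congr! 1
  simp only [smul_sub, smul_smul, Matrix.mul_smul, Matrix.smul_mul, mul_one,
    mul_inv_cancel₀ ha', one_smul, Complex.ofReal_mul]

theorem PosSemidef.of_forall_add_smul_one {A : Matrix ι ι ℂ}
    (h : ∀ ε : ℝ, 0 < ε → (A + (ε : ℂ) • 1).PosSemidef) : A.PosSemidef := by
  have hlim : Tendsto (fun ε : ℝ => A + (ε : ℂ) • 1) (𝓝[>] 0) (𝓝 A) := by
    have : Continuous fun ε : ℝ => A + (ε : ℂ) • (1 : Matrix ι ι ℂ) := by fun_prop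
    simpa using (this.tendsto 0).mono_left nhdsWithin_le_nhds
  rw [← nonneg_iff_posSemidef]
  exact ge_of_tendsto hlim (eventually_nhdsWithin_of_forall fun ε hε => (h ε hε).nonneg)

end Matrix

/-- Lemma 2 (1): for `a, b : ℝ` and `C : M_n(ℂ)`, the block matrix
`[[a•I, C], [Cᴴ, b•I]]` is positive semidefinite iff `a ≥ 0`, `b ≥ 0` and
`‖C‖² ≤ a·b`, where `‖C‖` is the ℓ²→ℓ² operator norm. -/
theorem stmt0 (n : ℕ) (hn : 1 ≤ n) (a b : ℝ) (C : Matrix (Fin n) (Fin n) ℂ) :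
    (Matrix.fromBlocks ((a : ℂ) • (1 : Matrix (Fin n) (Fin n) ℂ)) C
      Cᴴ ((b : ℂ) • (1 : Matrix (Fin n) (Fin n) ℂ))).PosSemidef ↔
    0 ≤ a ∧ 0 ≤ b ∧ ‖C‖ ^ 2 ≤ a * b := by
  have : Nonempty (Fin n) := ⟨⟨0, hn⟩⟩
  constructor
  · intro hM
    obtain ⟨ha, hb⟩ := PosSemidef.nonneg_of_fromBlocks_smul_one hM
    refine ⟨ha, hb, ?_⟩
    have hlim : Tendsto (fun ε : ℝ => (a + ε) * (b + ε)) (𝓝[>] 0) (𝓝 (a * b)) := by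
      have : Continuous fun ε : ℝ => (a + ε) * (b + ε) := by fun_prop
      simpa using (this.tendsto 0).mono_left nhdsWithin_le_nhds
    refine ge_of_tendsto hlim (eventually_nhdsWithin_of_forall fun ε (hε : 0 < ε) => ?_)
    rw [← posSemidef_fromBlocks_smul_one_iff (by linarith) (by linarith),
      ← fromBlocks_smul_one_add_smul_one]
    exact hM.add (PosSemidef.one.smul (by exact_mod_cast hε.le))
  · rintro ⟨ha, hb, hC⟩
    refine PosSemidef.of_forall_add_smul_one fun ε hε => ?_
    rw [fromBlocks_smul_one_add_smul_one,
      posSemidef_fromBlocks_smul_one_iff (by linarith) (by linarith)]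
    nlinarith
end

section
/- Let n ≥ 1, let a, d ∈ ℂ and let B, C ∈ M_n(ℂ). If the block matrix [[a·I_n, B],[C, d·I_n]] is positive semidefinite, then the block matrix [[a·I_n, (1/4)·Bᵗ],[(1/4)·Cᵗ, d·I_n]] is positive semidefinite. (That is, the map Φ_n on the operator system A_n is positive.) -/
/-!
A block matrix `[[a•1, B], [C, d•1]]` is positive semidefinite exactly when `C = Bᴴ`,
`a, d ≥ 0` and `(Re ⟪p, B q⟫)² ≤ a‖p‖² · d‖q‖²`, i.e. `‖B‖² ≤ a d`. This condition is invariant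
under `B ↦ Bᴴ`, so exchanging the two off-diagonal blocks preserves positivity. The map `Φ_n` is
this exchange, followed by the transpose and by scaling the off-diagonal blocks by `1/4`; the
latter is a convex combination of the matrix and its conjugate by `diag(1, -1)`.
-/

open Matrix
open scoped ComplexOrder

namespace Matrix

open RCLike ComplexConjugate

variable {𝕜 ι κ : Type*} [RCLike 𝕜] [Fintype ι] [Fintype κ]

lemma dotProduct_fromBlocks_mulVec_sumElim {R : Type*} [CommSemiring R] [Star R]
    (A : Matrix ι ι R) (B : Matrix ι κ R) (C : Matrix κ ι R) (D : Matrix κ κ R)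
    (p : ι → R) (q : κ → R) :
    star (Sum.elim p q) ⬝ᵥ (fromBlocks A B C D *ᵥ Sum.elim p q) =
      star p ⬝ᵥ (A *ᵥ p) + star p ⬝ᵥ (B *ᵥ q) + (star q ⬝ᵥ (C *ᵥ p) + star q ⬝ᵥ (D *ᵥ q)) := by
  simp only [fromBlocks_mulVec, Function.star_sumElim, sumElim_dotProduct_sumElim, dotProduct_add,
    Sum.elim_comp_inl, Sum.elim_comp_inr]

lemma re_dotProduct_star_self_nonneg (p : ι → 𝕜) : 0 ≤ re (star p ⬝ᵥ p) :=
  (nonneg_iff.mp (dotProduct_star_self_nonneg p)).1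

lemma ofReal_re_dotProduct_star_self (p : ι → 𝕜) : ((re (star p ⬝ᵥ p) : ℝ) : 𝕜) = star p ⬝ᵥ p :=
  (nonneg_iff_exists_ofReal.mp (dotProduct_star_self_nonneg p)).elim fun _ ⟨_, h⟩ => by
    rw [← h, ofReal_re]

variable [DecidableEq ι] [DecidableEq κ]

lemma dotProduct_fromBlocks_ofReal_smul_one_mulVec_sumElim (α δ : ℝ) (B : Matrix ι κ 𝕜)
    (p : ι → 𝕜) (q : κ → 𝕜) :
    star (Sum.elim p q) ⬝ᵥ (fromBlocks ((α : 𝕜) • 1) B Bᴴ ((δ : 𝕜) • 1) *ᵥ Sum.elim p q) =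
      ((α * re (star p ⬝ᵥ p) + 2 * re (star p ⬝ᵥ (B *ᵥ q)) + δ * re (star q ⬝ᵥ q) : ℝ) : 𝕜) := by
  have hconj : star q ⬝ᵥ (Bᴴ *ᵥ p) = conj (star p ⬝ᵥ (B *ᵥ q)) := by
    rw [star_dotProduct, star_mulVec, conjTranspose_conjTranspose, ← dotProduct_mulVec]; rfl
  rw [dotProduct_fromBlocks_mulVec_sumElim, hconj, smul_mulVec, smul_mulVec, one_mulVec,
    one_mulVec, dotProduct_smul, dotProduct_smul]
  push_cast
  simp only [ofReal_re_dotProduct_star_self]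
  rw [← add_conj]
  simp only [smul_eq_mul]
  ring

theorem posSemidef_fromBlocks_smul_one_iff_s2 [Nonempty ι] [Nonempty κ] {a d : 𝕜}
    {B : Matrix ι κ 𝕜} {C : Matrix κ ι 𝕜} :
    (fromBlocks (a • 1) B C (d • 1)).PosSemidef ↔ C = Bᴴ ∧ 0 ≤ a ∧ 0 ≤ d ∧
      ∀ p q, re (star p ⬝ᵥ (B *ᵥ q)) ^ 2 ≤ re a * re (star p ⬝ᵥ p) * (re d * re (star q ⬝ᵥ q)) := by
  constructor
  · intro h
    have hC : C = Bᴴ := (isHermitian_fromBlocks_iff.mp h.isHermitian).2.1.symm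
    have ha : 0 ≤ a := by simpa using h.diag_nonneg (i := Sum.inl (Classical.arbitrary ι))
    have hd : 0 ≤ d := by simpa using h.diag_nonneg (i := Sum.inr (Classical.arbitrary κ))
    refine ⟨hC, ha, hd, fun p q => ?_⟩
    obtain ⟨α, -, rfl⟩ := nonneg_iff_exists_ofReal.mp ha
    obtain ⟨δ, -, rfl⟩ := nonneg_iff_exists_ofReal.mp hd
    subst hC
    have hquadratic (t : ℝ) : 0 ≤ α * re (star p ⬝ᵥ p) * (t * t) +
        2 * re (star p ⬝ᵥ (B *ᵥ q)) * t + δ * re (star q ⬝ᵥ q) := by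
      have := h.dotProduct_mulVec_nonneg (Sum.elim ((t : 𝕜) • p) q)
      rw [dotProduct_fromBlocks_ofReal_smul_one_mulVec_sumElim, ofReal_nonneg] at this
      simp only [star_smul, star_def, conj_ofReal, smul_dotProduct, dotProduct_smul, smul_eq_mul,
        re_ofReal_mul] at this
      linarith
    have hdiscrim := discrim_le_zero hquadratic
    rw [discrim] at hdiscrim
    simp only [ofReal_re]
    nlinarith
  · rintro ⟨rfl, ha, hd, hB⟩
    obtain ⟨α, hα, rfl⟩ := nonneg_iff_exists_ofReal.mp ha
    obtain ⟨δ, hδ, rfl⟩ := nonneg_iff_exists_ofReal.mp hd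
    refine PosSemidef.of_dotProduct_mulVec_nonneg
      (IsHermitian.fromBlocks (by simp [IsHermitian]) rfl (by simp [IsHermitian])) fun x => ?_
    rw [← Sum.elim_comp_inl_inr x, dotProduct_fromBlocks_ofReal_smul_one_mulVec_sumElim,
      ofReal_nonneg]
    set p := x ∘ Sum.inl
    set q := x ∘ Sum.inr
    have hpq := hB p q
    have hp := mul_nonneg hα (re_dotProduct_star_self_nonneg p)
    have hq := mul_nonneg hδ (re_dotProduct_star_self_nonneg q)
    simp only [ofReal_re] at hpq
    nlinarith [sq_nonneg (α * re (star p ⬝ᵥ p) - δ * re (star q ⬝ᵥ q))]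

theorem PosSemidef.fromBlocks_smul_one_swap [Nonempty ι] {a d : 𝕜} {B C : Matrix ι ι 𝕜}
    (h : (fromBlocks (a • 1) B C (d • 1)).PosSemidef) :
    (fromBlocks (a • 1) C B (d • 1)).PosSemidef := by
  obtain ⟨rfl, ha, hd, hB⟩ := posSemidef_fromBlocks_smul_one_iff_s2.mp h
  refine posSemidef_fromBlocks_smul_one_iff_s2.mpr
    ⟨(conjTranspose_conjTranspose B).symm, ha, hd, fun p q => ?_⟩
  rw [star_dotProduct, star_mulVec, conjTranspose_conjTranspose, ← dotProduct_mulVec]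
  simp only [star_def, conj_re]
  linarith [hB q p]

theorem PosSemidef.fromBlocks_smul_one_transpose [Nonempty ι] {a d : 𝕜} {B C : Matrix ι ι 𝕜}
    (h : (fromBlocks (a • 1) B C (d • 1)).PosSemidef) :
    (fromBlocks (a • 1) Bᵀ Cᵀ (d • 1)).PosSemidef := by
  simpa only [fromBlocks_transpose, transpose_smul, transpose_one] using
    h.fromBlocks_smul_one_swap.transpose

theorem PosSemidef.fromBlocks_neg_offDiag {A : Matrix ι ι 𝕜} {B : Matrix ι κ 𝕜}
    {C : Matrix κ ι 𝕜} {D : Matrix κ κ 𝕜} (h : (fromBlocks A B C D).PosSemidef) :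
    (fromBlocks A (-B) (-C) D).PosSemidef := by
  simpa [fromBlocks_conjTranspose, fromBlocks_multiply] using
    h.conjTranspose_mul_mul_same (fromBlocks (1 : Matrix ι ι 𝕜) 0 0 (-1 : Matrix κ κ 𝕜))

theorem PosSemidef.fromBlocks_smul_offDiag {A : Matrix ι ι 𝕜} {B : Matrix ι κ 𝕜}
    {C : Matrix κ ι 𝕜} {D : Matrix κ κ 𝕜} (h : (fromBlocks A B C D).PosSemidef) {c : ℝ}
    (hc : |c| ≤ 1) :
    (fromBlocks A (c • B) (c • C) D).PosSemidef := by
  obtain ⟨hc₁, hc₂⟩ := abs_le.mp hc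
  have hconvex : fromBlocks A (c • B) (c • C) D =
      ((1 + c) / 2) • fromBlocks A B C D + ((1 - c) / 2) • fromBlocks A (-B) (-C) D := by
    simp only [fromBlocks_smul, fromBlocks_add]
    congr 1 <;> module
  rw [hconvex]
  exact (h.smul (by linarith)).add (h.fromBlocks_neg_offDiag.smul (by linarith))

end Matrix

/-- The map `Φ_n` on the operator system `A_n` is positive: if
`[[a•I, B], [C, d•I]]` is positive semidefinite, then so is
`[[a•I, (1/4)•Bᵗ], [(1/4)•Cᵗ, d•I]]`. -/
theorem stmt2 (n : ℕ) (hn : 1 ≤ n) (a d : ℂ) (B C : Matrix (Fin n) (Fin n) ℂ)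
    (h : (Matrix.fromBlocks (a • (1 : Matrix (Fin n) (Fin n) ℂ)) B
      C (d • (1 : Matrix (Fin n) (Fin n) ℂ))).PosSemidef) :
    (Matrix.fromBlocks (a • (1 : Matrix (Fin n) (Fin n) ℂ)) ((1 / 4 : ℂ) • Bᵀ)
      ((1 / 4 : ℂ) • Cᵀ) (d • (1 : Matrix (Fin n) (Fin n) ℂ))).PosSemidef := by
  have : Nonempty (Fin n) := ⟨⟨0, hn⟩⟩
  have hquarter : |(1 / 4 : ℝ)| ≤ 1 := by norm_num [abs_of_pos]
  have hsmul (M : Matrix (Fin n) (Fin n) ℂ) : (1 / 4 : ℂ) • M = (1 / 4 : ℝ) • M := by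
    rw [RCLike.real_smul_eq_coe_smul (K := ℂ)]; norm_num
  rw [hsmul, hsmul]
  exact h.fromBlocks_smul_one_transpose.fromBlocks_smul_offDiag hquarter
end

section
/- For every n > 16, there is no linear map Ψ : M_{2n}(ℂ) → M_{2n}(ℂ) that maps positive semidefinite matrices to positive semidefinite matrices and satisfies Ψ([[a·I_n, B],[C, d·I_n]]) = [[a·I_n, (1/4)·Bᵗ],[(1/4)·Cᵗ, d·I_n]] for all a, d ∈ ℂ and B, C ∈ M_n(ℂ). (That is, the positive unital norm-one map Φ_n admits no positive extension to M_{2n}(ℂ).) -/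
/-!
The diagonal projections `P = 1 ⊕ 0` and `Q = 0 ⊕ 1` are fixed by `Ψ`. The images of the matrix
units `E_kk ⊕ 0` are positive and sum to `P`, so they vanish on the diagonal of the second block
and hence, by positivity, on its rows and columns; symmetrically for `0 ⊕ E_jj` and `Q`. The
projection onto `e_k ⊕ e_j` is the sum of these two units and an off-diagonal part on which `Ψ`
is `c` times the transpose, so the principal `2 × 2` minor of its image at `(inl j, inr k)` gives
`c² ≤ Ψ(E_kk ⊕ 0)_jj · Ψ(0 ⊕ E_jj)_kk ≤ Ψ(E_kk ⊕ 0)_jj`. Summing over `k` yields `n c² ≤ P_jj = 1`,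
which fails for `c = 1/4` and `n > 16`.
-/

open Matrix
open scoped ComplexOrder

namespace Matrix.PosSemidef
variable {ι 𝕜 : Type*} [RCLike 𝕜] {A : Matrix ι ι 𝕜}

theorem apply_mul_apply_le (hA : A.PosSemidef) (i j : ι) : A i j * A j i ≤ A i i * A j j := by
  have h := (hA.submatrix ![i, j]).det_nonneg
  rw [det_fin_two] at h
  simpa [sub_nonneg] using h

theorem apply_eq_zero_of_diag_eq_zero (hA : A.PosSemidef) {j : ι} (hj : A j j = 0) (i : ι) :
    A i j = 0 := by
  have h := hA.apply_mul_apply_le i j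
  rw [hj, mul_zero, ← hA.1.apply j i, RCLike.star_def, RCLike.mul_conj] at h
  have : ‖A i j‖ ^ 2 ≤ 0 := by exact_mod_cast h
  simpa using le_antisymm this (sq_nonneg _)

theorem apply_eq_zero_of_diag_eq_zero' (hA : A.PosSemidef) {i : ι} (hi : A i i = 0) (j : ι) :
    A i j = 0 := by
  rw [← hA.1.apply, hA.apply_eq_zero_of_diag_eq_zero hi, star_zero]

theorem diag_le_sum_diag {κ : Type*} [Fintype κ] {A : κ → Matrix ι ι 𝕜}
    (hA : ∀ k, (A k).PosSemidef) (k : κ) (i : ι) : A k i i ≤ (∑ k, A k) i i := by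
  rw [sum_apply]
  exact Finset.single_le_sum (fun k _ ↦ (hA k).diag_nonneg) (Finset.mem_univ k)

end Matrix.PosSemidef

section
variable {ι R : Type*} [DecidableEq ι] [Ring R] [PartialOrder R] [StarRing R] [StarOrderedRing R]

theorem Matrix.posSemidef_single_self (i : ι) : (single i i (1 : R)).PosSemidef := by
  rw [← diagonal_single, posSemidef_diagonal_iff]
  exact Pi.single_nonneg.mpr zero_le_one

theorem Matrix.posSemidef_single_add_single [Finite ι] (x y : ι) :
    (single x x (1 : R) + (single x y 1 + single y x 1) + single y y 1).PosSemidef := by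
  convert posSemidef_vecMulVec_self_star (Pi.single x 1 + Pi.single y 1 : ι → R) using 1
  simp only [star_add, Pi.star_single, star_one, vecMulVec_add, add_vecMulVec,
    ← single_eq_single_vecMulVec_single]
  abel

end

section
variable {m n R : Type*} [DecidableEq m] [DecidableEq n] [Semiring R]

theorem Matrix.sum_single_inl_eq_fromBlocks [Fintype m] :
    (∑ k : m, single (Sum.inl k) (Sum.inl k) 1 : Matrix (m ⊕ n) (m ⊕ n) R) =
      fromBlocks 1 0 0 0 := by
  ext (i | i) (j | j) <;> simp [sum_apply, single_apply, one_apply, ite_and]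

theorem Matrix.sum_single_inr_eq_fromBlocks [Fintype n] :
    (∑ k : n, single (Sum.inr k) (Sum.inr k) 1 : Matrix (m ⊕ n) (m ⊕ n) R) =
      fromBlocks 0 0 0 1 := by
  ext (i | i) (j | j) <;> simp [sum_apply, single_apply, one_apply, ite_and]

end

structure IsPositiveBlockTransposeExtension {ι : Type*} [Fintype ι] [DecidableEq ι] (c : ℂ)
    (Ψ : Matrix (ι ⊕ ι) (ι ⊕ ι) ℂ →ₗ[ℂ] Matrix (ι ⊕ ι) (ι ⊕ ι) ℂ) : Prop where
  posSemidef_map : ∀ M : Matrix (ι ⊕ ι) (ι ⊕ ι) ℂ, M.PosSemidef → (Ψ M).PosSemidef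
  map_fromBlocks : ∀ (a d : ℂ) (B C : Matrix ι ι ℂ),
    Ψ (fromBlocks (a • 1) B C (d • 1)) = fromBlocks (a • 1) (c • Bᵀ) (c • Cᵀ) (d • 1)

namespace IsPositiveBlockTransposeExtension

variable {ι : Type*} [Fintype ι] [DecidableEq ι] {c : ℂ}
  {Ψ : Matrix (ι ⊕ ι) (ι ⊕ ι) ℂ →ₗ[ℂ] Matrix (ι ⊕ ι) (ι ⊕ ι) ℂ}
  (h : IsPositiveBlockTransposeExtension c Ψ)
include h

theorem sum_map_single_inl : ∑ k, Ψ (single (Sum.inl k) (Sum.inl k) 1) = fromBlocks 1 0 0 0 := by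
  rw [← map_sum, sum_single_inl_eq_fromBlocks]
  simpa using h.map_fromBlocks 1 0 0 0

theorem sum_map_single_inr : ∑ k, Ψ (single (Sum.inr k) (Sum.inr k) 1) = fromBlocks 0 0 0 1 := by
  rw [← map_sum, sum_single_inr_eq_fromBlocks]
  simpa using h.map_fromBlocks 0 1 0 0

theorem map_offDiag (B C : Matrix ι ι ℂ) :
    Ψ (fromBlocks 0 B C 0) = fromBlocks 0 (c • Bᵀ) (c • Cᵀ) 0 := by
  simpa using h.map_fromBlocks 0 0 B C

theorem posSemidef_map_single (x : ι ⊕ ι) : (Ψ (single x x 1)).PosSemidef :=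
  h.posSemidef_map _ (posSemidef_single_self x)

theorem map_single_inl_apply_inr (k i : ι) :
    Ψ (single (Sum.inl k) (Sum.inl k) 1) (Sum.inr i) (Sum.inr i) = 0 := by
  have hpos k := h.posSemidef_map_single (Sum.inl k)
  refine le_antisymm ?_ (hpos k).diag_nonneg
  simpa [h.sum_map_single_inl] using PosSemidef.diag_le_sum_diag hpos k (Sum.inr i)

theorem map_single_inr_apply_inl (k i : ι) :
    Ψ (single (Sum.inr k) (Sum.inr k) 1) (Sum.inl i) (Sum.inl i) = 0 := by
  have hpos k := h.posSemidef_map_single (Sum.inr k)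
  refine le_antisymm ?_ (hpos k).diag_nonneg
  simpa [h.sum_map_single_inr] using PosSemidef.diag_le_sum_diag hpos k (Sum.inl i)

theorem map_single_inr_apply_inr_le_one (k i : ι) :
    Ψ (single (Sum.inr k) (Sum.inr k) 1) (Sum.inr i) (Sum.inr i) ≤ 1 := by
  have hpos k := h.posSemidef_map_single (Sum.inr k)
  simpa [h.sum_map_single_inr] using PosSemidef.diag_le_sum_diag hpos k (Sum.inr i)

theorem mul_self_le_map_single_inl_apply (j k : ι) :
    c * c ≤ Ψ (single (Sum.inl k) (Sum.inl k) 1) (Sum.inl j) (Sum.inl j) := by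
  set X := Ψ (single (Sum.inl k) (Sum.inl k) 1)
  set Y := Ψ (single (Sum.inr j) (Sum.inr j) 1)
  have hX := h.posSemidef_map_single (Sum.inl k)
  have hY := h.posSemidef_map_single (Sum.inr j)
  have hXinr := h.map_single_inl_apply_inr k k
  have hYinl := h.map_single_inr_apply_inl j j
  have hoff : single (Sum.inl k) (Sum.inr j) 1 + single (Sum.inr j) (Sum.inl k) 1 =
      fromBlocks 0 (single k j 1) (single j k 1) (0 : Matrix ι ι ℂ) := by
    ext (a | a) (b | b) <;> simp [single_apply]
  have minor : c * c ≤ X (Sum.inl j) (Sum.inl j) * Y (Sum.inr k) (Sum.inr k) := by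
    have hZ := h.posSemidef_map _ (posSemidef_single_add_single (R := ℂ) (Sum.inl k) (Sum.inr j))
    have := hZ.apply_mul_apply_le (Sum.inl j) (Sum.inr k)
    rw [map_add, map_add, hoff, h.map_offDiag] at this
    simpa [hX.apply_eq_zero_of_diag_eq_zero hXinr, hX.apply_eq_zero_of_diag_eq_zero' hXinr,
      hY.apply_eq_zero_of_diag_eq_zero hYinl, hY.apply_eq_zero_of_diag_eq_zero' hYinl] using this
  calc c * c ≤ X (Sum.inl j) (Sum.inl j) * Y (Sum.inr k) (Sum.inr k) := minor
    _ ≤ X (Sum.inl j) (Sum.inl j) * 1 :=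
      mul_le_mul_of_nonneg_left (h.map_single_inr_apply_inr_le_one j k) hX.diag_nonneg
    _ = X (Sum.inl j) (Sum.inl j) := mul_one _

theorem card_mul_le_one : Fintype.card ι * (c * c) ≤ 1 := by
  rcases isEmpty_or_nonempty ι with hι | ⟨⟨j⟩⟩
  · simp
  calc (Fintype.card ι : ℂ) * (c * c) = ∑ _k : ι, c * c := by simp
    _ ≤ ∑ k, Ψ (single (Sum.inl k) (Sum.inl k) 1) (Sum.inl j) (Sum.inl j) :=
      Finset.sum_le_sum fun k _ ↦ h.mul_self_le_map_single_inl_apply j k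
    _ = 1 := by rw [← Matrix.sum_apply, h.sum_map_single_inl]; simp

end IsPositiveBlockTransposeExtension

/-- For `n > 16` there is no positive (i.e. positive-semidefinite-preserving) linear
map `Ψ` on `M_{2n}(ℂ)` extending the map `Φ_n` on the operator system `A_n`. -/
theorem stmt4 (n : ℕ) (hn : 16 < n) :
    ¬ ∃ Ψ : Matrix (Fin n ⊕ Fin n) (Fin n ⊕ Fin n) ℂ →ₗ[ℂ]
        Matrix (Fin n ⊕ Fin n) (Fin n ⊕ Fin n) ℂ,
      (∀ M : Matrix (Fin n ⊕ Fin n) (Fin n ⊕ Fin n) ℂ, M.PosSemidef → (Ψ M).PosSemidef) ∧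
      (∀ (a d : ℂ) (B C : Matrix (Fin n) (Fin n) ℂ),
        Ψ (Matrix.fromBlocks (a • (1 : Matrix (Fin n) (Fin n) ℂ)) B
            C (d • (1 : Matrix (Fin n) (Fin n) ℂ))) =
          Matrix.fromBlocks (a • (1 : Matrix (Fin n) (Fin n) ℂ)) ((1 / 4 : ℂ) • Bᵀ)
            ((1 / 4 : ℂ) • Cᵀ) (d • (1 : Matrix (Fin n) (Fin n) ℂ))) := by
  rintro ⟨Ψ, hpos, hext⟩
  have h := (IsPositiveBlockTransposeExtension.mk hpos hext).card_mul_le_one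
  rw [Fintype.card_fin] at h
  have h16 : (n : ℂ) ≤ 16 := by linear_combination 16 * h
  exact absurd (by exact_mod_cast h16) hn.not_ge
end

section
/- Let n ≥ 1, let a, b ∈ ℝ and let C ∈ M_n(ℝ). Then ‖[[a·I_n, Cᵗ],[C, b·I_n]]‖ = ‖[[a·I_n, C],[Cᵗ, b·I_n]]‖, where ‖·‖ is the ℓ²→ℓ² operator norm on M_{2n}(ℝ). (That is, the positivity preserving unital involution Υ_n on S_n is an isometry, so it has norm 1.) -/
/-!
Both matrices are symmetric, so their ℓ²-operator norms are the largest absolute values of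
their eigenvalues, and it suffices that they have the same characteristic polynomial. For blocks
`α • 1` and `β • 1` on the diagonal, a Schur-complement computation gives
`det [[α, X], [Y, β]] = det (α β - X Y)`, and `det (c - X Y) = det (c - Y X)`; applied over `ℝ[X]`
to `t - M` this shows that swapping the off-diagonal blocks `C` and `Cᵀ` leaves the
characteristic polynomial unchanged.
-/

open Matrix
open scoped Matrix.Norms.L2Operator

namespace Matrix

variable {n : Type*} [Fintype n] [DecidableEq n]

section CommRing

variable {R : Type*} [CommRing R]

theorem det_fromBlocks_smul_one {α β : R} (hβ : IsRegular β) (X Y : Matrix n n R) :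
    (fromBlocks (α • 1) X Y (β • 1)).det = ((α * β) • 1 - X * Y).det := by
  have hprod : fromBlocks (α • 1) X Y (β • 1) * fromBlocks (β • 1) 0 (-Y) 1
      = fromBlocks ((α * β) • 1 - X * Y) X 0 (β • 1) := by
    simp [fromBlocks_multiply, smul_smul, sub_eq_add_neg, mul_comm]
  have hdet := congrArg det hprod
  rw [det_mul, det_fromBlocks_zero₁₂, det_fromBlocks_zero₂₁, det_one, mul_one, det_smul,
    det_one, mul_one] at hdet
  exact (hβ.pow _).right hdet

theorem det_smul_one_sub_mul_comm (c : R) (X Y : Matrix n n R) :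
    (c • 1 - X * Y).det = (c • 1 - Y * X).det := by
  simp only [smul_one_eq_diagonal, ← scalar_apply, ← eval_charpoly, charpoly_mul_comm]

open Polynomial in
theorem charpoly_fromBlocks_smul_one (a b : R) (X Y : Matrix n n R) :
    (fromBlocks (a • 1) X Y (b • 1)).charpoly
      = (((Polynomial.X - C a) * (Polynomial.X - C b)) • 1 - X.map C * Y.map C).det := by
  have hcharmatrix : charmatrix (fromBlocks (a • 1) X Y (b • 1))
      = fromBlocks ((Polynomial.X - C a) • 1) (-X.map C) (-Y.map C)
          ((Polynomial.X - C b) • 1) := by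
    ext (i | i) (j | j) <;> by_cases h : i = j <;> simp [h, sub_smul]
  rw [charpoly, hcharmatrix, det_fromBlocks_smul_one (monic_X_sub_C b).isRegular, neg_mul_neg]

theorem charpoly_fromBlocks_smul_one_comm (a b : R) (X Y : Matrix n n R) :
    (fromBlocks (a • 1) X Y (b • 1)).charpoly = (fromBlocks (a • 1) Y X (b • 1)).charpoly := by
  rw [charpoly_fromBlocks_smul_one, charpoly_fromBlocks_smul_one, det_smul_one_sub_mul_comm]

end CommRing

variable {𝕜 : Type*} [RCLike 𝕜] {A B : Matrix n n 𝕜}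

theorem IsHermitian.l2_opNorm_eq_norm_eigenvalues (hA : A.IsHermitian) :
    ‖A‖ = ‖hA.eigenvalues‖ := by
  conv_lhs => rw [hA.spectral_theorem, Unitary.conjStarAlgAut_apply]
  rw [CStarRing.norm_mul_mem_unitary _ (Unitary.star_mem hA.eigenvectorUnitary.prop),
    CStarRing.norm_mem_unitary_mul _ hA.eigenvectorUnitary.prop, l2_opNorm_diagonal]
  simp [Pi.norm_def]

theorem IsHermitian.l2_opNorm_eq_of_charpoly_eq (hA : A.IsHermitian) (hB : B.IsHermitian)
    (h : A.charpoly = B.charpoly) : ‖A‖ = ‖B‖ := by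
  rw [hA.l2_opNorm_eq_norm_eigenvalues, hB.l2_opNorm_eq_norm_eigenvalues,
    (eigenvalues_eq_eigenvalues_iff hA hB).2 h]

end Matrix

theorem stmt7_general (n : ℕ) (a b : ℝ) (C : Matrix (Fin n) (Fin n) ℝ) :
    ‖Matrix.fromBlocks (a • (1 : Matrix (Fin n) (Fin n) ℝ)) Cᵀ
        C (b • (1 : Matrix (Fin n) (Fin n) ℝ))‖ =
      ‖Matrix.fromBlocks (a • (1 : Matrix (Fin n) (Fin n) ℝ)) C
        Cᵀ (b • (1 : Matrix (Fin n) (Fin n) ℝ))‖ := by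
  have hI : (1 : Matrix (Fin n) (Fin n) ℝ).IsHermitian := isHermitian_one
  exact IsHermitian.l2_opNorm_eq_of_charpoly_eq
    ((hI.smul (.all a)).fromBlocks rfl (hI.smul (.all b)))
    ((hI.smul (.all a)).fromBlocks rfl (hI.smul (.all b)))
    (charpoly_fromBlocks_smul_one_comm a b Cᵀ C)

/-- The map `Υ_n` on the real operator system `S_n` is an isometry for the ℓ²→ℓ²
operator norm: `‖[[a•I, Cᵗ], [C, b•I]]‖ = ‖[[a•I, C], [Cᵗ, b•I]]‖`. -/
theorem stmt7 (n : ℕ) (hn : 1 ≤ n) (a b : ℝ) (C : Matrix (Fin n) (Fin n) ℝ) :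
    ‖Matrix.fromBlocks (a • (1 : Matrix (Fin n) (Fin n) ℝ)) Cᵀ
        C (b • (1 : Matrix (Fin n) (Fin n) ℝ))‖ =
      ‖Matrix.fromBlocks (a • (1 : Matrix (Fin n) (Fin n) ℝ)) C
        Cᵀ (b • (1 : Matrix (Fin n) (Fin n) ℝ))‖ :=
  stmt7_general n a b C
end

section
/- For every n ≥ 2, there is no linear map Ψ : M_{2n}(ℝ) → M_{2n}(ℝ) that maps positive semidefinite matrices to positive semidefinite matrices and satisfies Ψ([[a·I_n, C],[Cᵗ, b·I_n]]) = [[a·I_n, Cᵗ],[C, b·I_n]] for all a, b ∈ ℝ and C ∈ M_n(ℝ). (That is, the positive unital isometry Υ_n admits no positivity preserving extension to M_{2n}(ℝ).) -/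
/-!
Suppose `Ψ` is positive and extends `Υ`, and fix `i, j`. With `v = (eᵢ, eⱼ)`, the positive
matrix `v vᵀ` splits as `Eᵢᵢ ⊕ 0`, plus the element `[[0, Eᵢⱼ], [Eⱼᵢ, 0]]` of `S_n`, plus
`0 ⊕ Eⱼⱼ`. Since `0 ≤ Eᵢᵢ ⊕ 0 ≤ I ⊕ 0` and `Ψ` fixes `I ⊕ 0`, the image `A` of `Eᵢᵢ ⊕ 0` vanishes
outside the upper left corner and has diagonal entries at most `1`; likewise the image `D` of
`0 ⊕ Eⱼⱼ` vanishes outside the lower right corner. But `Ψ` moves the off-diagonal `1` to the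
entry `(j, n + i)`, so positivity of `Ψ (v vᵀ)` on the indices `j, n + i` forces
`2 ≤ A (j, j) + D (n + i, n + i)`, i.e. `D (n + i, n + i) ≥ 1`. Summing over `j` gives
`Ψ (0 ⊕ I) (n + i, n + i) ≥ n`, whereas `Ψ (0 ⊕ I) = 0 ⊕ I`.
-/

open Matrix Sum

namespace Matrix

namespace PosSemidef

variable {m : Type*} {A B : Matrix m m ℝ}

theorem two_mul_apply_le [Fintype m] (hA : A.PosSemidef) (a b : m) :
    2 * A a b ≤ A a a + A b b := by
  classical
  have hsymm : A b a = A a b := hA.1.apply a b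
  have := hA.dotProduct_mulVec_nonneg (Pi.single a 1 - Pi.single b 1)
  simp only [star_trivial, mulVec_sub, mulVec_single, MulOpposite.op_one, one_smul,
    dotProduct_sub, sub_dotProduct, single_dotProduct, col_apply, one_mul, hsymm, sub_nonneg,
    tsub_le_iff_right] at this
  linarith

theorem apply_eq_zero_of_apply_self_eq_zero [Fintype m] (hA : A.PosSemidef) {b : m}
    (hb : A b b = 0) (a : m) : A a b = 0 := by
  classical
  have := (hA.dotProduct_mulVec_zero_iff (Pi.single b 1)).1 (by simpa using hb)
  simpa using congrFun this a

theorem apply_self_le_of_sub (hBA : (B - A).PosSemidef) (a : m) : A a a ≤ B a a :=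
  sub_nonneg.1 hBA.diag_nonneg

theorem apply_eq_zero_of_sub [Fintype m] (hA : A.PosSemidef) (hBA : (B - A).PosSemidef)
    {b : m} (hb : B b b = 0) (a : m) : A a b = 0 :=
  hA.apply_eq_zero_of_apply_self_eq_zero
    (le_antisymm (hb ▸ apply_self_le_of_sub hBA b) hA.diag_nonneg) a

theorem fromBlocks_zero {n : Type*} [Fintype m] [Fintype n] {D : Matrix n n ℝ}
    (hA : A.PosSemidef) (hD : D.PosSemidef) : (fromBlocks A 0 0 D).PosSemidef := by
  refine .of_dotProduct_mulVec_nonneg (hA.1.fromBlocks (by simp) hD.1) fun v => ?_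
  rw [← Sum.elim_comp_inl_inr v, fromBlocks_mulVec, Function.star_sumElim,
    sumElim_dotProduct_sumElim]
  simpa using add_nonneg (hA.dotProduct_mulVec_nonneg _) (hD.dotProduct_mulVec_nonneg _)

end PosSemidef

section

variable {l m n o α : Type*}

theorem fromBlocks_sub [Sub α] (A A' : Matrix n l α) (B B' : Matrix n m α)
    (C C' : Matrix o l α) (D D' : Matrix o m α) :
    fromBlocks A B C D - fromBlocks A' B' C' D' =
      fromBlocks (A - A') (B - B') (C - C') (D - D') := by
  ext (_ | _) (_ | _) <;> rfl

theorem fromBlocks_vecMulVec [Mul α] (a : m → α) (b : n → α) (c : l → α) (d : o → α) :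
    fromBlocks (vecMulVec a c) (vecMulVec a d) (vecMulVec b c) (vecMulVec b d) =
      vecMulVec (Sum.elim a b) (Sum.elim c d) := by
  ext (_ | _) (_ | _) <;> rfl

variable [DecidableEq m]

theorem posSemidef_single_self_s8 (i : m) : (single i i (1 : ℝ)).PosSemidef := by
  rw [← diagonal_single]
  exact .diagonal (Pi.single_nonneg.2 zero_le_one)

theorem posSemidef_one_sub_single_self (i : m) : (1 - single i i (1 : ℝ)).PosSemidef := by
  rw [← diagonal_one, ← diagonal_single, diagonal_sub]
  refine .diagonal fun k => ?_
  by_cases h : k = i <;> simp [h]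

end

end Matrix

section

variable {ι : Type*} [Fintype ι] [DecidableEq ι]

local notation "M₂" => Matrix (ι ⊕ ι) (ι ⊕ ι) ℝ

theorem one_le_apply_map_fromBlocks_single {Ψ : M₂ →ₗ[ℝ] M₂}
    (hpos : ∀ M : M₂, M.PosSemidef → (Ψ M).PosSemidef)
    (hext : ∀ (a b : ℝ) (C : Matrix ι ι ℝ),
      Ψ (fromBlocks (a • 1) C Cᵀ (b • 1)) = fromBlocks (a • 1) Cᵀ C (b • 1)) (i j : ι) :
    1 ≤ Ψ (fromBlocks 0 0 0 (single j j 1)) (inr i) (inr i) := by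
  set A := Ψ (fromBlocks (single i i 1) 0 0 0)
  set D := Ψ (fromBlocks 0 0 0 (single j j 1))
  have hP₁ : Ψ (fromBlocks 1 0 0 0) = fromBlocks 1 0 0 0 := by simpa using hext 1 0 0
  have hP₂ : Ψ (fromBlocks 0 0 0 1) = fromBlocks 0 0 0 1 := by simpa using hext 0 1 0
  have hK : Ψ (fromBlocks 0 (single i j 1) (single j i 1) 0) =
      fromBlocks 0 (single j i 1) (single i j 1) 0 := by simpa using hext 0 0 (single i j 1)
  have hA : A.PosSemidef := hpos _ ((posSemidef_single_self_s8 i).fromBlocks_zero .zero)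
  have hD : D.PosSemidef := hpos _ (PosSemidef.zero.fromBlocks_zero (posSemidef_single_self_s8 j))
  have hA₁ : (fromBlocks 1 0 0 0 - A).PosSemidef := by
    rw [← hP₁, ← map_sub, fromBlocks_sub, sub_zero]
    exact hpos _ ((posSemidef_one_sub_single_self i).fromBlocks_zero .zero)
  have hD₁ : (fromBlocks 0 0 0 1 - D).PosSemidef := by
    rw [← hP₂, ← map_sub, fromBlocks_sub, sub_zero]
    exact hpos _ (PosSemidef.zero.fromBlocks_zero (posSemidef_one_sub_single_self j))
  have hN : (A + fromBlocks 0 (single j i 1) (single i j 1) 0 + D).PosSemidef := by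
    rw [← hK, ← map_add, ← map_add, fromBlocks_add, fromBlocks_add]
    simp only [add_zero, zero_add, single_eq_single_vecMulVec_single, fromBlocks_vecMulVec]
    simpa using hpos _ (posSemidef_vecMulVec_self_star (Sum.elim (Pi.single i 1) (Pi.single j 1)))
  have hA_off : A (inl j) (inr i) = 0 := hA.apply_eq_zero_of_sub hA₁ (by simp) _
  have hA_diag : A (inr i) (inr i) = 0 := hA.apply_eq_zero_of_sub hA₁ (by simp) _
  have hA_le : A (inl j) (inl j) ≤ 1 := by simpa using hA₁.apply_self_le_of_sub (inl j)
  have hD_off : D (inl j) (inr i) = 0 := by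
    rw [← hD.1.apply, hD.apply_eq_zero_of_sub hD₁ (by simp), star_zero]
  have hD_diag : D (inl j) (inl j) = 0 := hD.apply_eq_zero_of_sub hD₁ (by simp) _
  have := hN.two_mul_apply_le (inl j) (inr i)
  simp only [Matrix.add_apply, fromBlocks_apply₁₁, fromBlocks_apply₁₂, fromBlocks_apply₂₂,
    Matrix.zero_apply, single_apply_same, hA_off, hA_diag, hD_off, hD_diag, zero_add, add_zero,
    mul_one] at this
  linarith

theorem card_le_one_of_posSemidef_map_blockTranspose {Ψ : M₂ →ₗ[ℝ] M₂}
    (hpos : ∀ M : M₂, M.PosSemidef → (Ψ M).PosSemidef)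
    (hext : ∀ (a b : ℝ) (C : Matrix ι ι ℝ),
      Ψ (fromBlocks (a • 1) C Cᵀ (b • 1)) = fromBlocks (a • 1) Cᵀ C (b • 1)) :
    Fintype.card ι ≤ 1 := by
  rcases isEmpty_or_nonempty ι with hι | ⟨⟨i⟩⟩
  · simp
  have hsum : ∑ j, Ψ (fromBlocks 0 0 0 (single j j 1)) = fromBlocks 0 0 0 1 := by
    have : ∑ j : ι, (fromBlocks 0 0 0 (single j j 1) : M₂) = fromBlocks 0 0 0 1 := by
      rw [← sum_single_one]
      ext (_ | _) (_ | _) <;> simp [Matrix.sum_apply]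
    rw [← map_sum, this]
    simpa using hext 0 1 0
  have : (Fintype.card ι : ℝ) ≤ 1 := calc
    (Fintype.card ι : ℝ) = ∑ _j : ι, 1 := by simp
    _ ≤ ∑ j, Ψ (fromBlocks 0 0 0 (single j j 1)) (inr i) (inr i) :=
      Finset.sum_le_sum fun j _ => one_le_apply_map_fromBlocks_single hpos hext i j
    _ = 1 := by simp [← Matrix.sum_apply, hsum]
  exact_mod_cast this

end

/-- For `n ≥ 2` there is no positivity preserving linear map `Ψ` on `M_{2n}(ℝ)`
extending the map `Υ_n` on the real operator system `S_n`. -/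
theorem stmt8 (n : ℕ) (hn : 2 ≤ n) :
    ¬ ∃ Ψ : Matrix (Fin n ⊕ Fin n) (Fin n ⊕ Fin n) ℝ →ₗ[ℝ]
        Matrix (Fin n ⊕ Fin n) (Fin n ⊕ Fin n) ℝ,
      (∀ M : Matrix (Fin n ⊕ Fin n) (Fin n ⊕ Fin n) ℝ, M.PosSemidef → (Ψ M).PosSemidef) ∧
      (∀ (a b : ℝ) (C : Matrix (Fin n) (Fin n) ℝ),
        Ψ (Matrix.fromBlocks (a • (1 : Matrix (Fin n) (Fin n) ℝ)) C
            Cᵀ (b • (1 : Matrix (Fin n) (Fin n) ℝ))) =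
          Matrix.fromBlocks (a • (1 : Matrix (Fin n) (Fin n) ℝ)) Cᵀ
            C (b • (1 : Matrix (Fin n) (Fin n) ℝ))) := by
  rintro ⟨Ψ, hpos, hext⟩
  have := card_le_one_of_posSemidef_map_blockTranspose hpos hext
  rw [Fintype.card_fin] at this
  omega
end

section
/- Let n ≥ 1, let a, b ∈ ℂ and let C ∈ M_n(ℂ). If the complex block matrix [[a·I_n, C],[Cᵗ, b·I_n]] is positive semidefinite, then the block matrix [[a·I_n, Cᵗ],[C, b·I_n]] is positive semidefinite. (That is, the complexification Υ'_n of Υ_n is positive.) -/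
open Matrix
open scoped ComplexOrder

/-!
Conjugating a block matrix by `[[0, s•1], [t•1, 0]]` swaps both its diagonal and its
off-diagonal blocks, rescaling them by `|t|²`, `|s|²` and `t̄s`. When `a, b > 0`, real `s, t`
with `st = 1` and `t²b = a` (so `s²a = b`) bring the diagonal back to `a•1, b•1`, which
exchanges `C` and `Cᵀ`. The degenerate case follows by adding `ε•1` and letting `ε → 0`,
since the positive semidefinite cone is closed.
-/

namespace Matrix

section

variable {R : Type*} {m n : Type*} [DecidableEq m] [DecidableEq n]

theorem fromBlocks_add_smul_one [Semiring R] (A : Matrix m m R) (B : Matrix m n R)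
    (C : Matrix n m R) (D : Matrix n n R) (c : R) :
    fromBlocks A B C D + c • 1 = fromBlocks (A + c • 1) B C (D + c • 1) := by
  rw [← fromBlocks_one, fromBlocks_smul, fromBlocks_add]
  simp

theorem fromBlocks_antidiag_conj [CommSemiring R] [StarRing R] [Fintype m] [Fintype n]
    (s t : R) (A : Matrix m m R) (B : Matrix m n R) (C : Matrix n m R) (D : Matrix n n R) :
    (fromBlocks 0 (s • 1 : Matrix m m R) (t • 1 : Matrix n n R) 0)ᴴ * fromBlocks A B C D *
        fromBlocks 0 (s • 1 : Matrix m m R) (t • 1 : Matrix n n R) 0 =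
      fromBlocks ((star t * t) • D) ((star t * s) • C) ((star s * t) • B) ((star s * s) • A) := by
  simp [fromBlocks_conjTranspose, fromBlocks_multiply, smul_smul, mul_comm]

end

variable {𝕜 : Type*} [RCLike 𝕜] {m n : Type*} [Fintype m] [Fintype n]

open Filter Topology in
theorem PosSemidef.of_forall_add_smul_one_s9 [DecidableEq n] {T : Matrix n n 𝕜}
    (H : ∀ ε : ℝ, 0 < ε → (T + (ε : 𝕜) • 1).PosSemidef) : T.PosSemidef := by
  refine .of_dotProduct_mulVec_nonneg ?_ fun x ↦ ?_
  · simpa [IsHermitian, conjTranspose_add] using (H 1 one_pos).isHermitian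
  · have hlim : Tendsto (fun ε : ℝ ↦ star x ⬝ᵥ (T + (ε : 𝕜) • 1) *ᵥ x) (𝓝[>] 0)
        (𝓝 (star x ⬝ᵥ T *ᵥ x)) := by
      simp only [add_mulVec, smul_mulVec, one_mulVec, dotProduct_add, dotProduct_smul]
      refine Continuous.tendsto' ?_ 0 _ (by simp) |>.mono_left nhdsWithin_le_nhds
      fun_prop
    exact ge_of_tendsto hlim (eventually_nhdsWithin_of_forall fun ε hε ↦
      (H ε hε).dotProduct_mulVec_nonneg x)

theorem PosSemidef.fromBlocks_smul_one_swap_offDiag [DecidableEq m] [DecidableEq n] {a b : 𝕜}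
    (ha : 0 < a) (hb : 0 < b) {B : Matrix m n 𝕜} {C : Matrix n m 𝕜}
    (h : (fromBlocks (a • 1) B C (b • 1)).PosSemidef) :
    (fromBlocks (a • 1) C B (b • 1)).PosSemidef := by
  obtain ⟨α, hα, rfl⟩ := RCLike.pos_iff_exists_ofReal.mp ha
  obtain ⟨β, hβ, rfl⟩ := RCLike.pos_iff_exists_ofReal.mp hb
  have hconj := h.conjTranspose_mul_mul_same
    (fromBlocks 0 ((√(β / α) : 𝕜) • 1 : Matrix m m 𝕜) ((√(α / β) : 𝕜) • 1 : Matrix n n 𝕜) 0)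
  have hsqrt : √(α / β) * √(β / α) = 1 := by
    rw [← Real.sqrt_mul (by positivity), div_mul_div_comm, mul_comm β, div_self (by positivity),
      Real.sqrt_one]
  have hsq {x y : ℝ} (hx : 0 < x) (hy : 0 < y) : √(x / y) * √(x / y) * y = x := by
    rw [Real.mul_self_sqrt (by positivity), div_mul_cancel₀ _ hy.ne']
  rw [fromBlocks_antidiag_conj] at hconj
  convert hconj using 2 <;>
    simp only [RCLike.star_def, RCLike.conj_ofReal, smul_smul, ← RCLike.ofReal_mul]
  · rw [hsq hα hβ]
  · rw [hsqrt, RCLike.ofReal_one, one_smul]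
  · rw [mul_comm, hsqrt, RCLike.ofReal_one, one_smul]
  · rw [hsq hβ hα]

end Matrix

/-- The complexification `Υ'_n` of `Υ_n` is positive: for `a, b : ℂ` and `C : M_n(ℂ)`,
if `[[a•I, C], [Cᵗ, b•I]]` is positive semidefinite then so is `[[a•I, Cᵗ], [C, b•I]]`. -/
theorem stmt9 (n : ℕ) (hn : 1 ≤ n) (a b : ℂ) (C : Matrix (Fin n) (Fin n) ℂ)
    (h : (Matrix.fromBlocks (a • (1 : Matrix (Fin n) (Fin n) ℂ)) C
      Cᵀ (b • (1 : Matrix (Fin n) (Fin n) ℂ))).PosSemidef) :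
    (Matrix.fromBlocks (a • (1 : Matrix (Fin n) (Fin n) ℂ)) Cᵀ
      C (b • (1 : Matrix (Fin n) (Fin n) ℂ))).PosSemidef := by
  let i₀ : Fin n := ⟨0, hn⟩
  have ha : 0 ≤ a := by simpa using h.diag_nonneg (i := .inl i₀)
  have hb : 0 ≤ b := by simpa using h.diag_nonneg (i := .inr i₀)
  refine .of_forall_add_smul_one fun ε hε ↦ ?_
  have hε' : (0 : ℂ) < ε := by exact_mod_cast hε
  have hshift := h.add (PosSemidef.one.smul hε'.le)
  rw [fromBlocks_add_smul_one, ← add_smul, ← add_smul] at hshift ⊢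
  exact hshift.fromBlocks_smul_one_swap_offDiag (add_pos_of_nonneg_of_pos ha hε')
    (add_pos_of_nonneg_of_pos hb hε')
end

section
/- Let n ≥ 1, let A ∈ M_n(ℂ) and let b, c, d ∈ ℂ. If the block matrix [[A, b·I_n],[c·I_n, d·I_n]] is positive semidefinite, then the block matrix [[Aᵗ, b·I_n],[c·I_n, d·I_n]] is positive semidefinite. (That is, the map Γ_n on the operator system T_n is positive.) -/
/-!
Positivity forces `c = b̄`, so the transpose of the given matrix is `[[Aᵗ, b̄·I], [b·I, d·I]]`,
again positive semidefinite. Conjugating it by the unitary `diag(I, u·I)`, where `u` is a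
unimodular scalar with `u·b̄ = b`, exchanges the off-diagonal scalars `b̄` and `b`.
-/

open Matrix
open scoped ComplexOrder

namespace Matrix

variable {R m n : Type*} [CommRing R] [PartialOrder R] [StarRing R]
  [Fintype m] [Fintype n] [DecidableEq m] [DecidableEq n]

theorem PosSemidef.fromBlocks_smul_offDiag_s11 {A : Matrix m m R} {B : Matrix m n R}
    {C : Matrix n m R} {D : Matrix n n R} (h : (fromBlocks A B C D).PosSemidef)
    {u : R} (hu : star u * u = 1) : (fromBlocks A (u • B) (star u • C) D).PosSemidef := by
  have hu' : u * star u = 1 := by rw [mul_comm, hu]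
  simpa [fromBlocks_conjTranspose, fromBlocks_multiply, smul_smul, hu'] using
    h.conjTranspose_mul_mul_same (fromBlocks (1 : Matrix m m R) 0 0 (u • (1 : Matrix n n R)))

end Matrix

theorem Complex.exists_star_mul_self_eq_one_mul_star_eq (b : ℂ) :
    ∃ u : ℂ, star u * u = 1 ∧ u * star b = b := by
  rcases eq_or_ne b 0 with rfl | hb
  · exact ⟨1, by simp, by simp⟩
  · have hb' : star b ≠ 0 := star_ne_zero.mpr hb
    refine ⟨b / star b, ?_, div_mul_cancel₀ b hb'⟩
    rw [star_div₀, star_star]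
    field_simp

theorem Matrix.PosSemidef.fromBlocks_star_smul_one_swap {n : Type*} [Fintype n] [DecidableEq n]
    {A D : Matrix n n ℂ} {b : ℂ}
    (h : (fromBlocks A (star b • (1 : Matrix n n ℂ)) (b • 1) D).PosSemidef) :
    (fromBlocks A (b • (1 : Matrix n n ℂ)) (star b • 1) D).PosSemidef := by
  obtain ⟨u, hu, hub⟩ := Complex.exists_star_mul_self_eq_one_mul_star_eq b
  have hub' : star u * b = star b := calc
    star u * b = star u * (u * star b) := by rw [hub]
    _ = star b := by rw [← mul_assoc, hu, one_mul]
  simpa only [smul_smul, hub, hub'] using h.fromBlocks_smul_offDiag_s11 hu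

theorem stmt11_general (n : ℕ) (A : Matrix (Fin n) (Fin n) ℂ) (b c d : ℂ)
    (h : (Matrix.fromBlocks A (b • (1 : Matrix (Fin n) (Fin n) ℂ))
      (c • (1 : Matrix (Fin n) (Fin n) ℂ)) (d • (1 : Matrix (Fin n) (Fin n) ℂ))).PosSemidef) :
    (Matrix.fromBlocks Aᵀ (b • (1 : Matrix (Fin n) (Fin n) ℂ))
      (c • (1 : Matrix (Fin n) (Fin n) ℂ)) (d • (1 : Matrix (Fin n) (Fin n) ℂ))).PosSemidef := by
  obtain ⟨-, hbc, -, -⟩ := isHermitian_fromBlocks_iff.mp h.isHermitian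
  have hc : c • (1 : Matrix (Fin n) (Fin n) ℂ) = star b • 1 := by
    rw [← hbc, conjTranspose_smul, conjTranspose_one]
  have hT := h.transpose
  simp only [fromBlocks_transpose, hc, transpose_smul, transpose_one] at hT
  rw [hc]
  exact hT.fromBlocks_star_smul_one_swap

/-- The map `Γ_n` on the operator system `T_n` is positive: if
`[[A, b•I], [c•I, d•I]]` is positive semidefinite then so is `[[Aᵗ, b•I], [c•I, d•I]]`. -/
theorem stmt11 (n : ℕ) (hn : 1 ≤ n) (A : Matrix (Fin n) (Fin n) ℂ) (b c d : ℂ)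
    (h : (Matrix.fromBlocks A (b • (1 : Matrix (Fin n) (Fin n) ℂ))
      (c • (1 : Matrix (Fin n) (Fin n) ℂ)) (d • (1 : Matrix (Fin n) (Fin n) ℂ))).PosSemidef) :
    (Matrix.fromBlocks Aᵀ (b • (1 : Matrix (Fin n) (Fin n) ℂ))
      (c • (1 : Matrix (Fin n) (Fin n) ℂ)) (d • (1 : Matrix (Fin n) (Fin n) ℂ))).PosSemidef :=
  stmt11_general n A b c d h
end

section
/- Let n ≥ 1, let A ∈ M_n(ℂ) and let b, c, d ∈ ℂ. Set M = [[A, b·I_n],[c·I_n, d·I_n]] and N = [[A, c·I_n],[b·I_n, d·I_n]]. Then the characteristic polynomials of MᴴM and NᴴN are equal; consequently M and N have the same singular values. -/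
/-!
The lower-right block of the Gram matrix of `[[A, x•1], [y•1, d•1]]` is scalar, so its
characteristic polynomial is the determinant of a Schur complement over `R[X]`; expanded, that
complement is symmetric in `x` and `y`.
-/

open Matrix Polynomial

namespace Matrix

variable {R : Type*} [CommRing R] {m : Type*} [Fintype m] [DecidableEq m]

theorem det_fromBlocks_smul_one₂₂ [IsDomain R] (P Q S : Matrix m m R) {g : R} (hg : g ≠ 0) :
    (fromBlocks P Q S (g • 1)).det = (g • P - Q * S).det := by
  have hfactor : fromBlocks P Q S (g • 1) * fromBlocks (g • 1) 0 (-S) 1 =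
      fromBlocks (g • P - Q * S) Q 0 (g • 1) := by
    simp [fromBlocks_multiply, sub_eq_add_neg]
  have hdet := congrArg det hfactor
  rw [det_mul, det_fromBlocks_zero₁₂, det_fromBlocks_zero₂₁, det_one, mul_one] at hdet
  refine mul_right_cancel₀ ?_ hdet
  simpa using pow_ne_zero _ hg

theorem charpoly_fromBlocks_smul_one₂₂ [IsDomain R] (P Q S : Matrix m m R) (e : R) :
    (fromBlocks P Q S (e • 1)).charpoly =
      ((X - C e) • P.charmatrix - Q.map C * S.map C).det := by
  have hcorner : charmatrix (e • (1 : Matrix m m R)) = (X - C e) • 1 := by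
    ext i j
    by_cases h : i = j <;> simp [h]
  rw [charpoly, charmatrix_fromBlocks, hcorner,
    det_fromBlocks_smul_one₂₂ _ _ _ (X_sub_C_ne_zero e), neg_mul_neg]

theorem conjTranspose_mul_self_fromBlocks_smul_one [StarRing R] (A : Matrix m m R) (x y d : R) :
    (fromBlocks A (x • 1) (y • 1) (d • 1))ᴴ * fromBlocks A (x • 1) (y • 1) (d • 1) =
      fromBlocks (Aᴴ * A + (star y * y) • 1) (x • Aᴴ + (star y * d) • 1)
        (star x • A + (star d * y) • 1) ((star x * x + star d * d) • 1) := by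
  simp [fromBlocks_conjTranspose, fromBlocks_multiply, smul_smul, add_smul, mul_comm]

theorem charpoly_conjTranspose_mul_self_fromBlocks_smul_one [IsDomain R] [StarRing R]
    (A : Matrix m m R) (x y d : R) :
    ((fromBlocks A (x • 1) (y • 1) (d • (1 : Matrix m m R)))ᴴ *
      fromBlocks A (x • 1) (y • 1) (d • 1)).charpoly =
      ((X ^ 2 - C (star x * x + star y * y + star d * d) * X + C (star x * x * (star y * y))) • 1
        - (X - C (star d * d)) • (Aᴴ * A).map C - C (x * y * star d) • Aᴴ.map C
        - C (star x * star y * d) • A.map C).det := by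
  rw [conjTranspose_mul_self_fromBlocks_smul_one, charpoly_fromBlocks_smul_one₂₂]
  congr 1
  simp only [charmatrix, RingHom.mapMatrix_apply, scalar_apply, ← smul_one_eq_diagonal,
    Matrix.map_add _ (map_add C), Matrix.map_mul, Matrix.map_smul' _ _ _ (map_mul C),
    Matrix.map_one _ (map_zero C) (map_one C)]
  simp only [smul_sub, sub_mul, add_mul, mul_add, Matrix.smul_mul, Matrix.mul_smul, smul_smul,
    Matrix.one_mul, Matrix.mul_one, smul_add]
  match_scalars <;> simp only [map_add, map_mul] <;> ring

end Matrix

theorem stmt12_general (n : ℕ) (A : Matrix (Fin n) (Fin n) ℂ) (b c d : ℂ) :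
    ((Matrix.fromBlocks A (b • (1 : Matrix (Fin n) (Fin n) ℂ))
        (c • (1 : Matrix (Fin n) (Fin n) ℂ)) (d • (1 : Matrix (Fin n) (Fin n) ℂ)))ᴴ *
      Matrix.fromBlocks A (b • (1 : Matrix (Fin n) (Fin n) ℂ))
        (c • (1 : Matrix (Fin n) (Fin n) ℂ)) (d • (1 : Matrix (Fin n) (Fin n) ℂ))).charpoly =
    ((Matrix.fromBlocks A (c • (1 : Matrix (Fin n) (Fin n) ℂ))
        (b • (1 : Matrix (Fin n) (Fin n) ℂ)) (d • (1 : Matrix (Fin n) (Fin n) ℂ)))ᴴ *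
      Matrix.fromBlocks A (c • (1 : Matrix (Fin n) (Fin n) ℂ))
        (b • (1 : Matrix (Fin n) (Fin n) ℂ)) (d • (1 : Matrix (Fin n) (Fin n) ℂ))).charpoly := by
  rw [charpoly_conjTranspose_mul_self_fromBlocks_smul_one,
    charpoly_conjTranspose_mul_self_fromBlocks_smul_one]
  ring_nf

/-- For `M = [[A, b•I], [c•I, d•I]]` and `N = [[A, c•I], [b•I, d•I]]`, the matrices
`MᴴM` and `NᴴN` have the same characteristic polynomial; consequently `M` and `N`
have the same singular values. -/
theorem stmt12 (n : ℕ) (hn : 1 ≤ n) (A : Matrix (Fin n) (Fin n) ℂ) (b c d : ℂ) :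
    ((Matrix.fromBlocks A (b • (1 : Matrix (Fin n) (Fin n) ℂ))
        (c • (1 : Matrix (Fin n) (Fin n) ℂ)) (d • (1 : Matrix (Fin n) (Fin n) ℂ)))ᴴ *
      Matrix.fromBlocks A (b • (1 : Matrix (Fin n) (Fin n) ℂ))
        (c • (1 : Matrix (Fin n) (Fin n) ℂ)) (d • (1 : Matrix (Fin n) (Fin n) ℂ))).charpoly =
    ((Matrix.fromBlocks A (c • (1 : Matrix (Fin n) (Fin n) ℂ))
        (b • (1 : Matrix (Fin n) (Fin n) ℂ)) (d • (1 : Matrix (Fin n) (Fin n) ℂ)))ᴴ *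
      Matrix.fromBlocks A (c • (1 : Matrix (Fin n) (Fin n) ℂ))
        (b • (1 : Matrix (Fin n) (Fin n) ℂ)) (d • (1 : Matrix (Fin n) (Fin n) ℂ))).charpoly :=
  stmt12_general n A b c d
end

section
/- For every n ≥ 2, there is no linear map Ψ : M_{2n}(ℂ) → M_{2n}(ℂ) that maps positive semidefinite matrices to positive semidefinite matrices and satisfies Ψ([[A, b·I_n],[c·I_n, d·I_n]]) = [[Aᵗ, b·I_n],[c·I_n, d·I_n]] for all A ∈ M_n(ℂ) and b, c, d ∈ ℂ. (That is, the positive unital isometry Γ_n admits no positive extension to M_{2n}(ℂ).) -/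
/-!
Let `Ψ` be a positive extension of `Γ` and let `Φ(B)` be the upper-right block of
`Ψ(0 B; 0 0)`, so that `Φ(1) = 1`. Since `Ψ` fixes `0 ⊕ 1` and maps `u uᴴ ⊕ 0` to
`(u uᴴ)ᵀ ⊕ 0`, which annihilates `(ζ, 0)` whenever `u ⬝ᵥ ζ = 0`, a positive rank-one matrix
`v vᴴ` with `v = (u, c w)`, `|c| = 1`, `‖w‖ ≤ 1`, lies below a matrix whose image annihilates
`(ζ, 0)`; hence so does `Ψ(v vᴴ)`. Reading off the upper-right block for `c = 1` and `c = i`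
gives `⟪ζ, Φ(u wᴴ) y⟫ = 0` whenever `u ⬝ᵥ ζ = 0`, i.e. `Φ(u wᴴ) y` is a multiple of `ū`.
A linear function of `u` that is always a multiple of `ū` vanishes once there are two
coordinates, so `Φ` kills every matrix unit `Eₘₘ`, contradicting `Φ(1) = 1`.
-/

open Matrix
open scoped ComplexOrder

namespace Matrix

variable {m n 𝕜 α : Type*} [RCLike 𝕜]

theorem vecMulVec_sumElim [Mul α] (a : m → α) (b : n → α) (c : m → α) (d : n → α) :
    vecMulVec (Sum.elim a b) (Sum.elim c d) =
      fromBlocks (vecMulVec a c) (vecMulVec a d) (vecMulVec b c) (vecMulVec b d) := by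
  ext (i | i) (j | j) <;> rfl

theorem posSemidef_one_sub_vecMulVec_single [DecidableEq m] (i₀ : m) :
    (1 - vecMulVec (Pi.single i₀ (1 : 𝕜)) (star (Pi.single i₀ 1))).PosSemidef := by
  have : 1 - vecMulVec (Pi.single i₀ (1 : 𝕜)) (star (Pi.single i₀ 1)) =
      diagonal (fun i => if i = i₀ then 0 else 1) := by
    ext i j
    by_cases hij : i = j <;> by_cases hi : i = i₀ <;> simp_all [vecMulVec_apply]
  rw [this]
  exact PosSemidef.diagonal fun i => by split_ifs <;> simp

variable [Fintype m] [Fintype n]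

theorem PosSemidef.mulVec_eq_zero_of_add {A B : Matrix m m 𝕜} (hA : A.PosSemidef)
    (hB : B.PosSemidef) {z : m → 𝕜} (h : (A + B) *ᵥ z = 0) : A *ᵥ z = 0 := by
  have hsum : star z ⬝ᵥ A *ᵥ z + star z ⬝ᵥ B *ᵥ z = 0 := by
    rw [← dotProduct_add, ← add_mulVec, h, dotProduct_zero]
  rw [← hA.dotProduct_mulVec_zero_iff]
  exact ((add_eq_zero_iff_of_nonneg (hA.dotProduct_mulVec_nonneg z)
    (hB.dotProduct_mulVec_nonneg z)).mp hsum).1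

theorem IsHermitian.star_dotProduct_mulVec_eq_zero [CommSemiring α] [StarRing α]
    {M : Matrix m m α} (hM : M.IsHermitian) {z : m → α} (hz : M *ᵥ z = 0) (y : m → α) :
    star z ⬝ᵥ M *ᵥ y = 0 := by
  rw [dotProduct_mulVec, ← hM.eq, ← star_mulVec, hz, star_zero, zero_dotProduct]

theorem PosSemidef.fromBlocks_zero₁₂_zero₂₁ {A : Matrix m m 𝕜} {D : Matrix n n 𝕜}
    (hA : A.PosSemidef) (hD : D.PosSemidef) : (fromBlocks A 0 0 D).PosSemidef := by
  refine posSemidef_iff_dotProduct_mulVec.mpr ⟨hA.1.fromBlocks (by simp) hD.1, fun x => ?_⟩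
  rw [← Sum.elim_comp_inl_inr x, fromBlocks_mulVec, Function.star_sumElim,
    sumElim_dotProduct_sumElim]
  simpa using add_nonneg (hA.dotProduct_mulVec_nonneg _) (hD.dotProduct_mulVec_nonneg _)

theorem star_sumElim_zero_dotProduct_mulVec_sumElim_zero [CommSemiring α] [StarRing α]
    (M : Matrix (m ⊕ n) (m ⊕ n) α) (x : m → α) (y : n → α) :
    star (Sum.elim x 0) ⬝ᵥ M *ᵥ Sum.elim 0 y = star x ⬝ᵥ M.toBlocks₁₂ *ᵥ y := by
  rw [← fromBlocks_toBlocks M, fromBlocks_mulVec, Function.star_sumElim,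
    sumElim_dotProduct_sumElim]
  simp

end Matrix

theorem LinearMap.eq_zero_of_star_dotProduct_eq_zero {ι : Type*} [Fintype ι] [DecidableEq ι]
    [Nontrivial ι] (T : (ι → ℂ) →ₗ[ℂ] ι → ℂ)
    (hT : ∀ u ζ : ι → ℂ, u ⬝ᵥ ζ = 0 → star ζ ⬝ᵥ T u = 0) : T = 0 := by
  let e (a : ι) : ι → ℂ := Pi.single a 1
  have off_diag (a b : ι) (hab : a ≠ b) : T (e a) b = 0 := by
    simpa [e, hab.symm] using hT (e a) (e b) (by simp [e, hab])
  have diag (a : ι) : T (e a) a = 0 := by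
    obtain ⟨b, hba⟩ := exists_ne a
    -- `e a + I • e b` is isotropic for the bilinear pairing `⬝ᵥ`
    have h₁ := hT (e a + e b) (e a - e b) (by simp [e, hba])
    have h₂ := hT (e a + Complex.I • e b) (e a + Complex.I • e b) (by simp [e, hba])
    simp [e, off_diag a b hba.symm, off_diag b a hba] at h₁ h₂
    linear_combination (h₁ + h₂) / 2 + T (e b) b / 2 * Complex.I_mul_I
  refine LinearMap.pi_ext fun a x => funext fun b => ?_
  rw [show Pi.single a x = x • e a by simp [e, ← Pi.single_smul], map_smul]
  obtain rfl | hab := eq_or_ne a b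
  · simp [diag]
  · simp [off_diag a b hab]

variable {ι : Type*} [DecidableEq ι]

def IsPositiveMap {m : Type*} (Ψ : Matrix m m ℂ →ₗ[ℂ] Matrix m m ℂ) : Prop :=
  ∀ M : Matrix m m ℂ, M.PosSemidef → (Ψ M).PosSemidef

def ExtendsGamma (Ψ : Matrix (ι ⊕ ι) (ι ⊕ ι) ℂ →ₗ[ℂ] Matrix (ι ⊕ ι) (ι ⊕ ι) ℂ) : Prop :=
  ∀ (A : Matrix ι ι ℂ) (b c d : ℂ),
    Ψ (fromBlocks A (b • 1) (c • 1) (d • 1)) = fromBlocks Aᵀ (b • 1) (c • 1) (d • 1)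

def upperRightCorner (Ψ : Matrix (ι ⊕ ι) (ι ⊕ ι) ℂ →ₗ[ℂ] Matrix (ι ⊕ ι) (ι ⊕ ι) ℂ) :
    Matrix ι ι ℂ →ₗ[ℂ] Matrix ι ι ℂ where
  toFun B := (Ψ (fromBlocks 0 B 0 0)).toBlocks₁₂
  map_add' B C := by
    have : (fromBlocks 0 (B + C) 0 0 : Matrix (ι ⊕ ι) (ι ⊕ ι) ℂ) =
        fromBlocks 0 B 0 0 + fromBlocks 0 C 0 0 := by
      simp [fromBlocks_add]
    rw [this, map_add]
    rfl
  map_smul' c B := by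
    have : (fromBlocks 0 (c • B) 0 0 : Matrix (ι ⊕ ι) (ι ⊕ ι) ℂ) = c • fromBlocks 0 B 0 0 := by
      simp [fromBlocks_smul]
    rw [this, map_smul]
    rfl

namespace ExtendsGamma

variable {Ψ : Matrix (ι ⊕ ι) (ι ⊕ ι) ℂ →ₗ[ℂ] Matrix (ι ⊕ ι) (ι ⊕ ι) ℂ}

theorem apply_fromBlocks_zero (hΓ : ExtendsGamma Ψ) (A : Matrix ι ι ℂ) :
    Ψ (fromBlocks A 0 0 0) = fromBlocks Aᵀ 0 0 0 := by
  simpa using hΓ A 0 0 0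

theorem upperRightCorner_one (hΓ : ExtendsGamma Ψ) : upperRightCorner Ψ 1 = 1 := by
  change (Ψ (fromBlocks 0 1 0 0)).toBlocks₁₂ = 1
  simpa using congrArg toBlocks₁₂ (hΓ 0 1 0 0)

variable [Fintype ι]

theorem apply_lowerRight_mulVec_inl_eq_zero (hΓ : ExtendsGamma Ψ) (hpos : IsPositiveMap Ψ)
    {D : Matrix ι ι ℂ} (hD : D.PosSemidef) (h1D : (1 - D).PosSemidef) (ζ : ι → ℂ) :
    Ψ (fromBlocks 0 0 0 D) *ᵥ Sum.elim ζ 0 = 0 := by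
  refine (hpos _ (PosSemidef.zero.fromBlocks_zero₁₂_zero₂₁ hD)).mulVec_eq_zero_of_add
    (hpos _ (PosSemidef.zero.fromBlocks_zero₁₂_zero₂₁ h1D)) ?_
  have hsum : fromBlocks 0 0 0 D + fromBlocks 0 0 0 (1 - D) =
      fromBlocks (0 : Matrix ι ι ℂ) ((0 : ℂ) • 1) ((0 : ℂ) • 1) ((1 : ℂ) • 1) := by
    simp [fromBlocks_add]
  rw [← map_add, hsum, hΓ, fromBlocks_mulVec]
  simp

theorem apply_vecMulVec_mulVec_inl_eq_zero (hΓ : ExtendsGamma Ψ) (hpos : IsPositiveMap Ψ)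
    {w : ι → ℂ} (hw : (1 - vecMulVec w (star w)).PosSemidef) {u ζ : ι → ℂ} (hu : u ⬝ᵥ ζ = 0)
    {c : ℂ} (hc : c * star c = 1) :
    Ψ (vecMulVec (Sum.elim u (c • w)) (star (Sum.elim u (c • w)))) *ᵥ Sum.elim ζ 0 = 0 := by
  set v := Sum.elim u (c • w)
  set v' := Sum.elim u (-c • w)
  have hsum : vecMulVec v (star v) + (vecMulVec v' (star v') +
        (2 : ℂ) • fromBlocks 0 0 0 (1 - vecMulVec w (star w))) =
      fromBlocks ((2 : ℂ) • vecMulVec u (star u)) ((0 : ℂ) • 1) ((0 : ℂ) • 1) ((2 : ℂ) • 1) := by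
    rw [Complex.star_def] at hc
    ext (i | i) (j | j) <;> simp [v, v', vecMulVec_apply, one_apply]
    · ring
    · split_ifs <;> linear_combination 2 * w i * starRingEnd ℂ (w j) * hc
  have hrest : (vecMulVec v' (star v') +
      (2 : ℂ) • fromBlocks 0 0 0 (1 - vecMulVec w (star w))).PosSemidef :=
    (posSemidef_vecMulVec_self_star v').add
      ((PosSemidef.zero.fromBlocks_zero₁₂_zero₂₁ hw).smul (by norm_num))
  refine (hpos _ (posSemidef_vecMulVec_self_star v)).mulVec_eq_zero_of_add (hpos _ hrest) ?_
  rw [← map_add, hsum, hΓ, fromBlocks_mulVec]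
  simp [transpose_vecMulVec, smul_mulVec, vecMulVec_mulVec, hu]

theorem star_dotProduct_upperRightCorner_mulVec_eq_zero (hΓ : ExtendsGamma Ψ)
    (hpos : IsPositiveMap Ψ) {w : ι → ℂ} (hw : (1 - vecMulVec w (star w)).PosSemidef)
    {u ζ : ι → ℂ} (hu : u ⬝ᵥ ζ = 0) (y : ι → ℂ) :
    star ζ ⬝ᵥ upperRightCorner Ψ (vecMulVec u (star w)) *ᵥ y = 0 := by
  set p := star ζ ⬝ᵥ upperRightCorner Ψ (vecMulVec u (star w)) *ᵥ y
  set q := star ζ ⬝ᵥ (Ψ (fromBlocks 0 0 (vecMulVec w (star u)) 0)).toBlocks₁₂ *ᵥ y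
  have hww := posSemidef_vecMulVec_self_star w
  have hD := (hpos _ (PosSemidef.zero.fromBlocks_zero₁₂_zero₂₁ hww)).isHermitian
    |>.star_dotProduct_mulVec_eq_zero
      (hΓ.apply_lowerRight_mulVec_inl_eq_zero hpos hww hw ζ) (Sum.elim 0 y)
  rw [star_sumElim_zero_dotProduct_mulVec_sumElim_zero] at hD
  have hpq (c : ℂ) (hc : c * star c = 1) : star c * p + c * q = 0 := by
    have hX := (hpos _ (posSemidef_vecMulVec_self_star _)).isHermitian
      |>.star_dotProduct_mulVec_eq_zero
        (hΓ.apply_vecMulVec_mulVec_inl_eq_zero hpos hw hu hc) (Sum.elim 0 y)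
    have hdecomp : vecMulVec (Sum.elim u (c • w)) (star (Sum.elim u (c • w))) =
        fromBlocks (vecMulVec u (star u)) 0 0 0 +
          star c • fromBlocks 0 (vecMulVec u (star w)) 0 0 +
          c • fromBlocks 0 0 (vecMulVec w (star u)) 0 +
          fromBlocks 0 0 0 (vecMulVec w (star w)) := by
      have hc' : starRingEnd ℂ c * c = 1 := by rwa [mul_comm, ← Complex.star_def]
      rw [Function.star_sumElim, vecMulVec_sumElim]
      simp [fromBlocks_add, fromBlocks_smul, smul_vecMulVec, vecMulVec_smul, smul_smul, hc']
    rw [hdecomp] at hX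
    simp only [map_add, map_smul, hΓ.apply_fromBlocks_zero, add_mulVec, smul_mulVec,
      dotProduct_add, dotProduct_smul, star_sumElim_zero_dotProduct_mulVec_sumElim_zero,
      hD] at hX
    simpa [p, q, upperRightCorner] using hX
  have h₁ := hpq 1 (by simp)
  have h₂ := hpq Complex.I (by simp)
  rw [star_one, one_mul, one_mul] at h₁
  rw [Complex.star_def, Complex.conj_I] at h₂
  linear_combination (h₁ + Complex.I * h₂) / 2 + (p - q) / 2 * Complex.I_mul_I

theorem not_isPositiveMap [Nontrivial ι] (hΓ : ExtendsGamma Ψ) : ¬ IsPositiveMap Ψ := by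
  intro hpos
  have hcorner (m : ι) (y : ι → ℂ) : upperRightCorner Ψ (single m m 1) *ᵥ y = 0 := by
    let T := (mulVecBilin ℂ ℂ).flip y ∘ₗ upperRightCorner Ψ ∘ₗ
      (vecMulVecBilin ℂ ℂ).flip (Pi.single m (1 : ℂ))
    have hT : T = 0 := LinearMap.eq_zero_of_star_dotProduct_eq_zero T fun u ζ hu => by
      simpa [T] using hΓ.star_dotProduct_upperRightCorner_mulVec_eq_zero hpos
        (posSemidef_one_sub_vecMulVec_single m) hu y
    simpa [T, single_eq_single_vecMulVec_single] using LinearMap.congr_fun hT (Pi.single m 1)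
  have h : upperRightCorner Ψ 1 *ᵥ (1 : ι → ℂ) = 0 := by
    rw [← sum_single_one, map_sum, sum_mulVec]
    exact Finset.sum_eq_zero fun m _ => hcorner m 1
  rw [hΓ.upperRightCorner_one, one_mulVec] at h
  exact one_ne_zero h

end ExtendsGamma

/-- For `n ≥ 2` there is no positive linear map `Ψ` on `M_{2n}(ℂ)` extending the
positive unital isometry `Γ_n` on the operator system `T_n`. -/
theorem stmt16 (n : ℕ) (hn : 2 ≤ n) :
    ¬ ∃ Ψ : Matrix (Fin n ⊕ Fin n) (Fin n ⊕ Fin n) ℂ →ₗ[ℂ]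
        Matrix (Fin n ⊕ Fin n) (Fin n ⊕ Fin n) ℂ,
      (∀ M : Matrix (Fin n ⊕ Fin n) (Fin n ⊕ Fin n) ℂ, M.PosSemidef → (Ψ M).PosSemidef) ∧
      (∀ (A : Matrix (Fin n) (Fin n) ℂ) (b c d : ℂ),
        Ψ (Matrix.fromBlocks A (b • (1 : Matrix (Fin n) (Fin n) ℂ))
            (c • (1 : Matrix (Fin n) (Fin n) ℂ)) (d • (1 : Matrix (Fin n) (Fin n) ℂ))) =
          Matrix.fromBlocks Aᵀ (b • (1 : Matrix (Fin n) (Fin n) ℂ))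
            (c • (1 : Matrix (Fin n) (Fin n) ℂ)) (d • (1 : Matrix (Fin n) (Fin n) ℂ))) := by
  have : Nontrivial (Fin n) := Fin.nontrivial_iff_two_le.mpr hn
  rintro ⟨Ψ, hpos, hΓ⟩
  exact ExtendsGamma.not_isPositiveMap hΓ hpos
end

section
/- Let n ≥ 1. The linear map Ψ_n : M_{2n}(ℝ) → M_{2n}(ℝ) defined on blocks by Ψ_n([[A, B],[C, D]]) = [[Aᵗ, B],[C, D]] maps positive semidefinite real matrices to positive semidefinite real matrices; moreover Ψ_n([[A, b·I_n],[c·I_n, d·I_n]]) = [[Aᵗ, b·I_n],[c·I_n, d·I_n]] for all A ∈ M_n(ℝ) and b, c, d ∈ ℝ, so Ψ_n is a positive extension to M_{2n}(ℝ) of the restriction of Γ_n to the real operator system R_n. -/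
open Matrix

/-! A positive semidefinite real matrix is symmetric, so its upper-left block is symmetric and
`Ψ_n` fixes it. -/

theorem Matrix.IsSymm.fromBlocks_transpose_toBlocks₁₁ {m n α : Type*}
    {M : Matrix (m ⊕ n) (m ⊕ n) α} (hM : M.IsSymm) :
    Matrix.fromBlocks M.toBlocks₁₁ᵀ M.toBlocks₁₂ M.toBlocks₂₁ M.toBlocks₂₂ = M := by
  rw [← M.fromBlocks_toBlocks] at hM
  rw [(isSymm_fromBlocks_iff.1 hM).1.eq, fromBlocks_toBlocks]

theorem stmt17_general (n : ℕ)
    (Ψ : Matrix (Fin n ⊕ Fin n) (Fin n ⊕ Fin n) ℝ → Matrix (Fin n ⊕ Fin n) (Fin n ⊕ Fin n) ℝ)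
    (hΨ : ∀ A B C D : Matrix (Fin n) (Fin n) ℝ,
      Ψ (Matrix.fromBlocks A B C D) = Matrix.fromBlocks Aᵀ B C D) :
    (∀ M : Matrix (Fin n ⊕ Fin n) (Fin n ⊕ Fin n) ℝ, M.PosSemidef → (Ψ M).PosSemidef) ∧
    (∀ (A : Matrix (Fin n) (Fin n) ℝ) (b c d : ℝ),
      Ψ (Matrix.fromBlocks A (b • (1 : Matrix (Fin n) (Fin n) ℝ))
          (c • (1 : Matrix (Fin n) (Fin n) ℝ)) (d • (1 : Matrix (Fin n) (Fin n) ℝ))) =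
        Matrix.fromBlocks Aᵀ (b • (1 : Matrix (Fin n) (Fin n) ℝ))
          (c • (1 : Matrix (Fin n) (Fin n) ℝ)) (d • (1 : Matrix (Fin n) (Fin n) ℝ))) := by
  refine ⟨fun M hM => ?_, fun A b c d => hΨ A _ _ _⟩
  have hMsymm : M.IsSymm := isHermitian_iff_isSymm.1 hM.isHermitian
  have hΨM : Ψ M = M := by
    have := hΨ M.toBlocks₁₁ M.toBlocks₁₂ M.toBlocks₂₁ M.toBlocks₂₂
    rwa [fromBlocks_toBlocks, hMsymm.fromBlocks_transpose_toBlocks₁₁] at this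
  rwa [hΨM]

/-- The map `Ψ_n : M_{2n}(ℝ) → M_{2n}(ℝ)`, `[[A, B], [C, D]] ↦ [[Aᵗ, B], [C, D]]`,
is positivity preserving, and it agrees with `Γ_n` on the real operator system `R_n`
(i.e. `Ψ_n([[A, b•I], [c•I, d•I]]) = [[Aᵗ, b•I], [c•I, d•I]]`), so it is a positive
extension of the restriction of `Γ_n` to `R_n`. -/
theorem stmt17 (n : ℕ) (hn : 1 ≤ n)
    (Ψ : Matrix (Fin n ⊕ Fin n) (Fin n ⊕ Fin n) ℝ → Matrix (Fin n ⊕ Fin n) (Fin n ⊕ Fin n) ℝ)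
    (hΨ : ∀ A B C D : Matrix (Fin n) (Fin n) ℝ,
      Ψ (Matrix.fromBlocks A B C D) = Matrix.fromBlocks Aᵀ B C D) :
    (∀ M : Matrix (Fin n ⊕ Fin n) (Fin n ⊕ Fin n) ℝ, M.PosSemidef → (Ψ M).PosSemidef) ∧
    (∀ (A : Matrix (Fin n) (Fin n) ℝ) (b c d : ℝ),
      Ψ (Matrix.fromBlocks A (b • (1 : Matrix (Fin n) (Fin n) ℝ))
          (c • (1 : Matrix (Fin n) (Fin n) ℝ)) (d • (1 : Matrix (Fin n) (Fin n) ℝ))) =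
        Matrix.fromBlocks Aᵀ (b • (1 : Matrix (Fin n) (Fin n) ℝ))
          (c • (1 : Matrix (Fin n) (Fin n) ℝ)) (d • (1 : Matrix (Fin n) (Fin n) ℝ))) :=
  stmt17_general n Ψ hΨ
end

section
/- Let 1 ≤ n ≤ 4. The map Φ_n is completely positive: for every k ≥ 1, if a positive semidefinite matrix in M_k(M_{2n}(ℂ)) has all of its (i,j) blocks of the form [[a_{ij}·I_n, B_{ij}],[C_{ij}, d_{ij}·I_n]] with a_{ij}, d_{ij} ∈ ℂ and B_{ij}, C_{ij} ∈ M_n(ℂ), then the matrix obtained by applying Φ_n to each block, i.e., with (i,j) block [[a_{ij}·I_n, (1/4)·B_{ij}ᵗ],[(1/4)·C_{ij}ᵗ, d_{ij}·I_n]], is positive semidefinite. -/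
/-!
Each `Φ_n` is the restriction to `A_n` of a map in Kraus form. With `E_pq` the matrix units of
`M_n`, conjugating `[[A, B], [C, D]]` by `W_pq = [[E_pq, 0], [0, E_qp]]` and summing over `p, q`
gives `[[tr A • I, Bᵀ], [Cᵀ, tr D • I]]`, since `Σ E_pq B E_pq = Bᵀ` and `Σ E_pq A E_qp = tr A • I`.
On `A_n` a quarter of this sum has diagonal blocks `(n a / 4) • I`, so adding `(1 - n/4)` times
the compression to the diagonal blocks recovers `Φ_n`. For `n ≤ 4` both coefficients `1/4` and `1 - n/4` are nonnegative,
and a nonnegative combination of conjugations `X ↦ V X Vᴴ` is completely positive.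
-/

open Matrix
open scoped ComplexOrder Kronecker

namespace Matrix

variable {R ι κ l m m' o : Type*}

def blockwise (f : Matrix m m R → Matrix m' m' R) (M : Matrix (κ × m) (κ × m) R) :
    Matrix (κ × m') (κ × m') R :=
  of fun ip jq => f (of fun p q => M (ip.1, p) (jq.1, q)) ip.2 jq.2

lemma blockwise_add [Add R] (f g : Matrix m m R → Matrix m' m' R)
    (M : Matrix (κ × m) (κ × m) R) :
    blockwise (f + g) M = blockwise f M + blockwise g M :=
  rfl

lemma blockwise_smul [SMul R R] (c : R) (f : Matrix m m R → Matrix m' m' R)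
    (M : Matrix (κ × m) (κ × m) R) :
    blockwise (c • f) M = c • blockwise f M :=
  rfl

lemma blockwise_sum [AddCommMonoid R] (s : Finset ι) (f : ι → Matrix m m R → Matrix m' m' R)
    (M : Matrix (κ × m) (κ × m) R) :
    blockwise (∑ i ∈ s, f i) M = ∑ i ∈ s, blockwise (f i) M := by
  ext
  simp [blockwise, Finset.sum_apply, Matrix.sum_apply]

lemma blockwise_mul_mul_conjTranspose [CommSemiring R] [StarRing R] [Fintype m] [Fintype κ]
    [DecidableEq κ] (V : Matrix m' m R) (M : Matrix (κ × m) (κ × m) R) :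
    blockwise (fun X => V * X * Vᴴ) M =
      ((1 : Matrix κ κ R) ⊗ₖ V) * M * ((1 : Matrix κ κ R) ⊗ₖ V)ᴴ := by
  ext ⟨i, p⟩ ⟨j, q⟩
  simp [blockwise, mul_apply, one_apply, Fintype.sum_prod_type, ite_mul, mul_ite,
    Finset.sum_ite_eq, apply_ite star, Finset.sum_ite_irrel]

section CompletelyPositive

variable [CommRing R] [PartialOrder R] [StarRing R]

def IsCompletelyPositive (f : Matrix m m R → Matrix m' m' R) : Prop :=
  ∀ (k : ℕ) (M : Matrix (Fin k × m) (Fin k × m) R), M.PosSemidef → (blockwise f M).PosSemidef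

lemma isCompletelyPositive_mul_mul_conjTranspose [Fintype m] [Fintype m'] (V : Matrix m' m R) :
    IsCompletelyPositive (fun X : Matrix m m R => V * X * Vᴴ) := by
  intro k M hM
  rw [blockwise_mul_mul_conjTranspose]
  exact hM.mul_mul_conjTranspose_same _

namespace IsCompletelyPositive

variable [StarOrderedRing R] {f g : Matrix m m R → Matrix m' m' R}

lemma add (hf : IsCompletelyPositive f) (hg : IsCompletelyPositive g) :
    IsCompletelyPositive (f + g) :=
  fun k M hM => blockwise_add f g M ▸ (hf k M hM).add (hg k M hM)

lemma smul [PosSMulMono R R] [StarModule R R] (hf : IsCompletelyPositive f) {c : R}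
    (hc : 0 ≤ c) : IsCompletelyPositive (c • f) :=
  fun k M hM => blockwise_smul c f M ▸ (hf k M hM).smul hc

lemma sum {F : ι → Matrix m m R → Matrix m' m' R} (s : Finset ι)
    (hF : ∀ i ∈ s, IsCompletelyPositive (F i)) : IsCompletelyPositive (∑ i ∈ s, F i) :=
  fun k M hM => blockwise_sum s F M ▸ posSemidef_sum s fun i hi => hF i hi k M hM

end IsCompletelyPositive

end CompletelyPositive

lemma fromBlocks_sum [AddCommMonoid R] (s : Finset ι) (A : ι → Matrix o l R)
    (B : ι → Matrix o m R) (C : ι → Matrix m' l R) (D : ι → Matrix m' m R) :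
    ∑ i ∈ s, fromBlocks (A i) (B i) (C i) (D i) =
      fromBlocks (∑ i ∈ s, A i) (∑ i ∈ s, B i) (∑ i ∈ s, C i) (∑ i ∈ s, D i) := by
  ext (_ | _) (_ | _) <;> simp [Matrix.sum_apply]

section TransposeTrace

variable {n : Type*} [Fintype n] [DecidableEq n] [CommSemiring R]

lemma sum_single_mul_mul_single_eq_trace_smul (A : Matrix n n R) :
    ∑ p, ∑ q, single p q (1 : R) * A * single q p 1 = A.trace • 1 := by
  simp only [single_mul_mul_single, one_mul, mul_one]
  ext i j
  simp [Matrix.sum_apply, single_apply, one_apply, trace, ite_and]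

lemma sum_single_mul_mul_single_eq_transpose (B : Matrix n n R) :
    ∑ p, ∑ q, single p q (1 : R) * B * single p q 1 = Bᵀ := by
  simp only [single_mul_mul_single, one_mul, mul_one]
  exact (matrix_eq_sum_single Bᵀ).symm

variable [StarRing R]

def swapKraus (p q : n) : Matrix (n ⊕ n) (n ⊕ n) R :=
  fromBlocks (single p q 1) 0 0 (single q p 1)

lemma sum_swapKraus_conj (A B C D : Matrix n n R) :
    ∑ p, ∑ q, swapKraus p q * fromBlocks A B C D * (swapKraus p q)ᴴ =
      fromBlocks (A.trace • 1) Bᵀ Cᵀ (D.trace • 1) := by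
  simp only [swapKraus, fromBlocks_conjTranspose, conjTranspose_single, star_one,
    conjTranspose_zero, fromBlocks_multiply, Matrix.mul_zero, Matrix.zero_mul, add_zero,
    zero_add, fromBlocks_sum]
  rw [sum_single_mul_mul_single_eq_trace_smul, sum_single_mul_mul_single_eq_transpose,
    Finset.sum_comm, sum_single_mul_mul_single_eq_transpose, Finset.sum_comm (γ := n),
    sum_single_mul_mul_single_eq_trace_smul]

lemma fromBlocks_compression_add (A B C D : Matrix n n R) :
    fromBlocks 1 0 0 0 * fromBlocks A B C D * (fromBlocks 1 0 0 0)ᴴ +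
      fromBlocks 0 0 0 1 * fromBlocks A B C D * (fromBlocks 0 0 0 1)ᴴ = fromBlocks A 0 0 D := by
  simp [fromBlocks_conjTranspose, fromBlocks_multiply, fromBlocks_add]

end TransposeTrace

end Matrix

/-- A map on all of `M_{2n}(ℂ)` agreeing with `Φ_n` on `A_n`. -/
noncomputable def phiKraus (n : ℕ) :
    Matrix (Fin n ⊕ Fin n) (Fin n ⊕ Fin n) ℂ → Matrix (Fin n ⊕ Fin n) (Fin n ⊕ Fin n) ℂ :=
  let P₁ : Matrix (Fin n ⊕ Fin n) (Fin n ⊕ Fin n) ℂ := fromBlocks 1 0 0 0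
  let P₂ : Matrix (Fin n ⊕ Fin n) (Fin n ⊕ Fin n) ℂ := fromBlocks 0 0 0 1
  let W : Fin n → Fin n → Matrix (Fin n ⊕ Fin n) (Fin n ⊕ Fin n) ℂ := swapKraus
  (1 / 4 : ℂ) • ∑ p, ∑ q, (fun X => W p q * X * (W p q)ᴴ) +
    (1 - n / 4 : ℂ) • ((fun X => P₁ * X * P₁ᴴ) + fun X => P₂ * X * P₂ᴴ)

lemma phiKraus_fromBlocks (n : ℕ) (a d : ℂ) (B C : Matrix (Fin n) (Fin n) ℂ) :
    phiKraus n (fromBlocks (a • 1) B C (d • 1)) =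
      fromBlocks (a • 1) ((1 / 4 : ℂ) • Bᵀ) ((1 / 4 : ℂ) • Cᵀ) (d • 1) := by
  simp only [phiKraus, Pi.add_apply, Pi.smul_apply, Finset.sum_apply, sum_swapKraus_conj,
    fromBlocks_compression_add, trace_smul, trace_one, Fintype.card_fin, fromBlocks_smul,
    fromBlocks_add, smul_zero, add_zero]
  congr 1 <;> module

lemma isCompletelyPositive_phiKraus {n : ℕ} (hn : n ≤ 4) : IsCompletelyPositive (phiKraus n) := by
  have hcoeff : (0 : ℂ) ≤ 1 - n / 4 := by
    rw [sub_nonneg, div_le_one (by norm_num)]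
    exact_mod_cast hn
  refine .add (.smul (.sum _ fun p _ => .sum _ fun q _ => ?_) (by positivity))
    (.smul (.add ?_ ?_) hcoeff) <;>
  exact isCompletelyPositive_mul_mul_conjTranspose _

lemma blockwise_phiKraus_fromBlocks {n k : ℕ} (a d : Fin k → Fin k → ℂ)
    (B C : Fin k → Fin k → Matrix (Fin n) (Fin n) ℂ) :
    blockwise (phiKraus n) (of fun ip jq =>
        fromBlocks (a ip.1 jq.1 • 1) (B ip.1 jq.1) (C ip.1 jq.1) (d ip.1 jq.1 • 1) ip.2 jq.2) =
      of fun ip jq => fromBlocks (a ip.1 jq.1 • 1) ((1 / 4 : ℂ) • (B ip.1 jq.1)ᵀ)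
        ((1 / 4 : ℂ) • (C ip.1 jq.1)ᵀ) (d ip.1 jq.1 • 1) ip.2 jq.2 := by
  ext ⟨i, p⟩ ⟨j, q⟩
  exact congrFun₂ (phiKraus_fromBlocks n (a i j) (d i j) (B i j) (C i j)) p q

theorem stmt18_general (n : ℕ) (hn4 : n ≤ 4) (k : ℕ)
    (a d : Fin k → Fin k → ℂ) (B C : Fin k → Fin k → Matrix (Fin n) (Fin n) ℂ)
    (hpos : (Matrix.of fun (ip jq : Fin k × (Fin n ⊕ Fin n)) =>
        Matrix.fromBlocks (a ip.1 jq.1 • (1 : Matrix (Fin n) (Fin n) ℂ)) (B ip.1 jq.1)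
          (C ip.1 jq.1) (d ip.1 jq.1 • (1 : Matrix (Fin n) (Fin n) ℂ)) ip.2 jq.2).PosSemidef) :
    (Matrix.of fun (ip jq : Fin k × (Fin n ⊕ Fin n)) =>
        Matrix.fromBlocks (a ip.1 jq.1 • (1 : Matrix (Fin n) (Fin n) ℂ))
          ((1 / 4 : ℂ) • (B ip.1 jq.1)ᵀ) ((1 / 4 : ℂ) • (C ip.1 jq.1)ᵀ)
          (d ip.1 jq.1 • (1 : Matrix (Fin n) (Fin n) ℂ)) ip.2 jq.2).PosSemidef := by
  simpa only [blockwise_phiKraus_fromBlocks] using isCompletelyPositive_phiKraus hn4 k _ hpos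

/-- For `1 ≤ n ≤ 4` the map `Φ_n` is completely positive: for every `k ≥ 1`, if the
matrix in `M_k(M_{2n}(ℂ))` whose `(i,j)` block is `[[a i j • I, B i j], [C i j, d i j • I]]`
is positive semidefinite, then so is the matrix whose `(i,j)` block is
`Φ_n([[a i j • I, B i j], [C i j, d i j • I]]) =
  [[a i j • I, (1/4) • (B i j)ᵗ], [(1/4) • (C i j)ᵗ, d i j • I]]`. -/
theorem stmt18 (n : ℕ) (hn1 : 1 ≤ n) (hn4 : n ≤ 4) (k : ℕ) (hk : 1 ≤ k)
    (a d : Fin k → Fin k → ℂ) (B C : Fin k → Fin k → Matrix (Fin n) (Fin n) ℂ)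
    (hpos : (Matrix.of fun (ip jq : Fin k × (Fin n ⊕ Fin n)) =>
        Matrix.fromBlocks (a ip.1 jq.1 • (1 : Matrix (Fin n) (Fin n) ℂ)) (B ip.1 jq.1)
          (C ip.1 jq.1) (d ip.1 jq.1 • (1 : Matrix (Fin n) (Fin n) ℂ)) ip.2 jq.2).PosSemidef) :
    (Matrix.of fun (ip jq : Fin k × (Fin n ⊕ Fin n)) =>
        Matrix.fromBlocks (a ip.1 jq.1 • (1 : Matrix (Fin n) (Fin n) ℂ))
          ((1 / 4 : ℂ) • (B ip.1 jq.1)ᵀ) ((1 / 4 : ℂ) • (C ip.1 jq.1)ᵀ)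
          (d ip.1 jq.1 • (1 : Matrix (Fin n) (Fin n) ℂ)) ip.2 jq.2).PosSemidef :=
  stmt18_general n hn4 k a d B C hpos
end
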